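/- Let C be a class of permutations closed under substitution, under taking patterns, and under inverse. Then every permutation obtained by delayed substitution from C is a composition of at most 3 permutations of C. -/

import Mathlib

/-- `π` is a pattern of `σ`: there is a strictly increasing map `f` such that the relative
order of values of `σ` on the image of `f` matches that of `π`. -/
def IsPattern {p m : ℕ} (π : Equiv.Perm (Fin p)) (σ : Equiv.Perm (Fin m)) : Prop :=
  ∃ f : Fin p → Fin m, StrictMono f ∧ ∀ i j : Fin p, π i < π j ↔ σ (f i) < σ (f j)

/-- The permutation 2413 (0-indexed values 1,3,0,2). -/
def perm2413 : Equiv.Perm (Fin 4) where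
  toFun := ![1, 3, 0, 2]
  invFun := ![2, 0, 3, 1]
  left_inv := by intro x; fin_cases x <;> rfl
  right_inv := by intro x; fin_cases x <;> rfl

/-- The permutation 3142 (0-indexed values 2,0,3,1). -/
def perm3142 : Equiv.Perm (Fin 4) where
  toFun := ![2, 0, 3, 1]
  invFun := ![1, 3, 0, 2]
  left_inv := by intro x; fin_cases x <;> rfl
  right_inv := by intro x; fin_cases x <;> rfl

/-- A permutation is separable iff it avoids both 2413 and 3142 as patterns. -/
def Separable {n : ℕ} (σ : Equiv.Perm (Fin n)) : Prop :=
  ¬ IsPattern perm2413 σ ∧ ¬ IsPattern perm3142 σ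

/-- A class of permutations: one set of permutations for each size. -/
abbrev PermClass := ∀ n : ℕ, Equiv.Perm (Fin n) → Prop

/-- `σ` is (an isomorphic copy of) the permutation of the biorder obtained by restricting
the two orders `lt1`, `lt2` to the subset `S`: the enumeration `e` lists `S` increasingly
with respect to `lt1`, and the relative order of the values of `σ` matches `lt2`. -/
def BiorderPerm {V : Type*} (lt1 lt2 : V → V → Prop) (S : Set V) {n : ℕ}
    (σ : Equiv.Perm (Fin n)) : Prop :=
  ∃ e : Fin n → V, (∀ i, e i ∈ S) ∧ (∀ x ∈ S, ∃ i, e i = x) ∧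
    (∀ i j : Fin n, i < j ↔ lt1 (e i) (e j)) ∧
    (∀ i j : Fin n, σ i < σ j ↔ lt2 (e i) (e j))

/-- Composition of two classes of permutations: `C ∘ D = {σ ∘ τ}`. -/
def PermClass.comp (C D : PermClass) : PermClass :=
  fun n σ => ∃ τ₁ τ₂ : Equiv.Perm (Fin n), C n τ₁ ∧ D n τ₂ ∧ σ = τ₁ * τ₂

/-- `C^k`: compositions of `k` permutations of `C` of the same size. -/
def PermClass.pow (C : PermClass) (k : ℕ) : PermClass :=
  fun n σ => ∃ l : List (Equiv.Perm (Fin n)), l.length = k ∧ (∀ τ ∈ l, C n τ) ∧ l.prod = σ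

/-- `C⁻¹ = {σ⁻¹ : σ ∈ C}`. -/
def PermClass.inv (C : PermClass) : PermClass := fun n σ => C n σ⁻¹

/-- `σ` is the (iterated one-step) substitution of the permutations `α i` inside `τ`:
there is a monotone surjection `g` onto `Fin m` whose fibres are the blocks, the pattern
of `σ` induced on the `i`-th block is `α i`, and distinct blocks compare according
to `τ`. -/
def IsInflation {m : ℕ} (τ : Equiv.Perm (Fin m)) (ns : Fin m → ℕ)
    (α : ∀ i : Fin m, Equiv.Perm (Fin (ns i))) {n : ℕ} (σ : Equiv.Perm (Fin n)) : Prop :=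
  ∃ g : Fin n → Fin m, Monotone g ∧ Function.Surjective g ∧
    (∀ i : Fin m, BiorderPerm (· < ·) (fun a b => σ a < σ b) {x | g x = i} (α i)) ∧
    (∀ x y : Fin n, g x ≠ g y → (σ x < σ y ↔ τ (g x) < τ (g y)))

/-- `C` is closed under substitution: substituting permutations of `C` inside a
permutation of `C` stays in `C`. -/
def ClosedUnderSubstitution (C : PermClass) : Prop :=
  ∀ (m : ℕ) (τ : Equiv.Perm (Fin m)) (ns : Fin m → ℕ)
    (α : ∀ i : Fin m, Equiv.Perm (Fin (ns i))) (n : ℕ) (σ : Equiv.Perm (Fin n)),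
    C m τ → (∀ i, C (ns i) (α i)) → IsInflation τ ns α σ → C n σ

/-- The order-reversing permutation of `Fin n`. -/
def finRevPerm (n : ℕ) : Equiv.Perm (Fin n) :=
  ⟨Fin.rev, Fin.rev, Fin.rev_rev, Fin.rev_rev⟩

/-- `C` is closed under symmetry: conjugating by the decreasing permutation stays in `C`. -/
def ClosedUnderSymmetry (C : PermClass) : Prop :=
  ∀ (n : ℕ) (σ : Equiv.Perm (Fin n)), C n σ → C n (finRevPerm n * σ * finRevPerm n)

/-- `C` is closed under taking patterns. -/
def ClosedUnderPatterns (C : PermClass) : Prop :=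
  ∀ (p m : ℕ) (π : Equiv.Perm (Fin p)) (σ : Equiv.Perm (Fin m)),
    IsPattern π σ → C m σ → C p π

/-- `C` is closed under inverse. -/
def ClosedUnderInverse (C : PermClass) : Prop :=
  ∀ (n : ℕ) (σ : Equiv.Perm (Fin n)), C n σ → C n σ⁻¹

/-- The class of separable permutations. -/
def SepClass : PermClass := fun _ σ => Separable σ

/-- `σ` is a `k`-shuffle of the class `C`: its domain can be partitioned into `k` sets,
on each of which the induced pattern of `σ` belongs to `C`. -/
def ShuffleOf (k : ℕ) (C : PermClass) {n : ℕ} (σ : Equiv.Perm (Fin n)) : Prop :=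
  ∃ X : Fin k → Set (Fin n), (∀ x : Fin n, ∃! i, x ∈ X i) ∧
    ∀ (i : Fin k) (m : ℕ) (τ : Equiv.Perm (Fin m)),
      BiorderPerm (· < ·) (fun a b => σ a < σ b) (X i) τ → C m τ

/-- Raw data of a delayed structured tree: a rooted tree with node set `V`
(given by a parent function and a depth function), a linear order `llt` (`<`)
on its leaves, and for each node `t` a linear order `pre t` (`≺_t`) on the
grandchildren of `t`. -/
structure PreDTree (V : Type*) where
  root : V
  parent : V → V
  depth : V → ℕ
  llt : V → V → Prop
  pre : V → V → V → Prop

namespace PreDTree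

variable {V : Type*} (T : PreDTree V)

/-- `u` is an ancestor of (or equal to) `v`. -/
def anc (u v : V) : Prop := ∃ k : ℕ, T.parent^[k] v = u

/-- `v` is a leaf: it has no proper child. -/
def isLeaf (v : V) : Prop := ∀ u, T.parent u = v → u = v

/-- `u` is a child of `t`. -/
def isChild (u t : V) : Prop := T.parent u = t ∧ u ≠ t

/-- `u` is a grandchild of `t`. -/
def isGrandchild (u t : V) : Prop :=
  T.isChild u (T.parent u) ∧ T.isChild (T.parent u) t

/-- `u` and `v` are (distinct) siblings. -/
def siblings (u v : V) : Prop :=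
  u ≠ v ∧ T.isChild u (T.parent u) ∧ T.isChild v (T.parent v) ∧ T.parent u = T.parent v

/-- The set `L(t)` of leaves below `t`. -/
def leavesBelow (t : V) : Set V := {x | T.isLeaf x ∧ T.anc t x}

/-- The realised order `≺` on the leaves: `x ≺ y` iff `x' ≺_t y'` where `t` is the
closest common ancestor of `x, y` and `x', y'` are the grandchildren of `t`
(lying below distinct children of `t`) above `x, y` respectively. -/
def realLT (x y : V) : Prop :=
  ∃ t x' y', T.isGrandchild x' t ∧ T.isGrandchild y' t ∧ T.parent x' ≠ T.parent y' ∧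
    T.anc x' x ∧ T.anc y' y ∧ T.pre t x' y'

/-- Extension of `≺` to nodes: all leaves below `u` are `≺`-below all leaves below `v`. -/
def nodeLT (u v : V) : Prop :=
  (T.leavesBelow u).Nonempty ∧ (T.leavesBelow v).Nonempty ∧
    ∀ x ∈ T.leavesBelow u, ∀ y ∈ T.leavesBelow v, T.realLT x y

/-- Extension of the leaf order `<` to nodes. -/
def nodeLLT (u v : V) : Prop :=
  (T.leavesBelow u).Nonempty ∧ (T.leavesBelow v).Nonempty ∧
    ∀ x ∈ T.leavesBelow u, ∀ y ∈ T.leavesBelow v, T.llt x y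

/-- The leaf `v` distinguishes the siblings `u, w`: `u ≺ v ≺ w` or `w ≺ v ≺ u`. -/
def distinguishes (v u w : V) : Prop :=
  (T.nodeLT u v ∧ T.nodeLT v w) ∨ (T.nodeLT w v ∧ T.nodeLT v u)

/-- `u` and `w` are indistinguishable: `u = w`, or they are siblings not distinguished
by any leaf outside the leaves below their common parent. -/
def Indist (u w : V) : Prop :=
  u = w ∨ (T.siblings u w ∧
    ∀ v, T.isLeaf v → v ∉ T.leavesBelow (T.parent u) → ¬ T.distinguishes v u w)

/-- The realisation `≺` of the tree is a (strict) linear order on the leaves. -/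
def WellFormed : Prop :=
  (∀ x, ¬ T.realLT x x) ∧
  (∀ x y z, T.realLT x y → T.realLT y z → T.realLT x z) ∧
  (∀ x y, T.isLeaf x → T.isLeaf y → x ≠ y → T.realLT x y ∨ T.realLT y x)

end PreDTree

/-- The axioms of a delayed structured tree: the parent/depth data describe a rooted
tree, `llt` is a linear order on the leaves compatible with the tree, every leaf is an
only child, and each `pre t` is a linear order on the grandchildren of `t`. -/
structure IsDelayedTree {V : Type*} (T : PreDTree V) : Prop where
  parent_root : T.parent T.root = T.root
  depth_root : T.depth T.root = 0
  depth_parent : ∀ v, v ≠ T.root → T.depth (T.parent v) + 1 = T.depth v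
  llt_irrefl : ∀ x, ¬ T.llt x x
  llt_trans : ∀ x y z, T.llt x y → T.llt y z → T.llt x z
  llt_total : ∀ x y, T.isLeaf x → T.isLeaf y → x ≠ y → T.llt x y ∨ T.llt y x
  llt_dom : ∀ x y, T.llt x y → T.isLeaf x ∧ T.isLeaf y
  llt_compatible : ∀ t, ∀ x ∈ T.leavesBelow t, ∀ z ∈ T.leavesBelow t, ∀ y,
    T.llt x y → T.llt y z → y ∈ T.leavesBelow t
  leaf_only_child : ∀ x u, T.isLeaf x → T.isChild u (T.parent x) → u = x
  pre_irrefl : ∀ t x, ¬ T.pre t x x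
  pre_trans : ∀ t x y z, T.pre t x y → T.pre t y z → T.pre t x z
  pre_total : ∀ t x y, T.isGrandchild x t → T.isGrandchild y t → x ≠ y →
    T.pre t x y ∨ T.pre t y x
  pre_dom : ∀ t x y, T.pre t x y → T.isGrandchild x t ∧ T.isGrandchild y t

/-! The permutation `(<, ≺)` of the tree is the composite of three biorders on its leaves,
`(<, ◁₁)`, `(◁₁, ◁₂)` and `(◁₂, ≺)`, each of which is an iterated substitution of patterns and
inverses of the labels `(<_t, ≺_t)` and therefore lies in `C`.

The order `◁₁` compares two leaves with closest common ancestor `t` by applying the label `≺_s`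
of the parent `s` of `t` to the children of `t` above them (at the root, a child of each child
stands in). It reads the tree as an ordinary, undelayed substitution tree, so `(<, ◁₁)` is a
substitution along the tree.

The order `◁₂` comes from a separation process. At a state `(t, H)`, with `H` a set of
grandchildren of `t`, the process splits `H` into runs: maximal sets of siblings that no element
of `H` under another parent separates in `≺_t`. Between the leaves below two distinct runs, `◁₂`
compares the runs by `<`, `≺` by `≺_t` (for runs under one parent because a leaf below a
separating element lies between them), and `◁₁` by `≺_t` or through the parents. So `(◁₁, ◁₂)` and
`(◁₂, ≺)` are substitutions over the runs, and the process recurses into each run: into its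
grandchildren if it is a single node, and otherwise into its children, which are grandchildren of
the common parent. -/

open Classical

section LinearOrders

variable {V : Type*}

def StrictLinearOn (R : V → V → Prop) (S : Finset V) : Prop :=
  (∀ x ∈ S, ¬ R x x) ∧ (∀ x ∈ S, ∀ y ∈ S, ∀ z ∈ S, R x y → R y z → R x z) ∧
  (∀ x ∈ S, ∀ y ∈ S, x ≠ y → R x y ∨ R y x)

theorem StrictLinearOn.mono {R : V → V → Prop} {S S' : Finset V} (h : StrictLinearOn R S)
    (hsub : S' ⊆ S) : StrictLinearOn R S' :=
  ⟨fun x hx => h.1 x (hsub hx), fun x hx y hy z hz => h.2.1 x (hsub hx) y (hsub hy) z (hsub hz),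
    fun x hx y hy => h.2.2 x (hsub hx) y (hsub hy)⟩

def IsSortedEnum (R : V → V → Prop) (S : Finset V) {n : ℕ} (e : Fin n → V) : Prop :=
  (∀ i, e i ∈ S) ∧ (∀ x ∈ S, ∃ i, e i = x) ∧ (∀ i j : Fin n, i < j ↔ R (e i) (e j))

namespace IsSortedEnum

variable {R : V → V → Prop} {S : Finset V} {n : ℕ} {e : Fin n → V}

theorem injective (h : IsSortedEnum R S e) : Function.Injective e := by
  intro i j hij
  by_contra hne
  rcases lt_or_gt_of_ne hne with hlt | hlt
  · exact lt_irrefl j ((h.2.2 j j).mpr (hij ▸ (h.2.2 i j).mp hlt))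
  · exact lt_irrefl i ((h.2.2 i i).mpr (hij ▸ (h.2.2 j i).mp hlt))

theorem card_eq (h : IsSortedEnum R S e) : n = S.card := by
  have himg : Finset.univ.image e = S := by
    ext x
    simp only [Finset.mem_image, Finset.mem_univ, true_and]
    exact ⟨fun ⟨i, hi⟩ => hi ▸ h.1 i, fun hx => h.2.1 x hx⟩
  rw [← himg, Finset.card_image_of_injective _ h.injective, Finset.card_univ, Fintype.card_fin]

theorem unique {e' : Fin n → V} (h : IsSortedEnum R S e) (h' : IsSortedEnum R S e') :
    e = e' := by
  choose idx hidx using fun i => h'.2.1 (e i) (h.1 i)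
  have hmono : StrictMono idx := fun i j hij => by
    rw [h'.2.2, hidx, hidx]
    exact (h.2.2 i j).mp hij
  funext i
  rw [← hidx i, hmono.apply_eq]

theorem strictLinearOn (h : IsSortedEnum R S e) : StrictLinearOn R S := by
  refine ⟨?_, ?_, ?_⟩
  · intro x hx
    obtain ⟨i, rfl⟩ := h.2.1 x hx
    exact fun hr => lt_irrefl i ((h.2.2 i i).mpr hr)
  · intro x hx y hy z hz hxy hyz
    obtain ⟨i, rfl⟩ := h.2.1 x hx
    obtain ⟨j, rfl⟩ := h.2.1 y hy
    obtain ⟨k, rfl⟩ := h.2.1 z hz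
    exact (h.2.2 i k).mp (((h.2.2 i j).mpr hxy).trans ((h.2.2 j k).mpr hyz))
  · intro x hx y hy hne
    obtain ⟨i, rfl⟩ := h.2.1 x hx
    obtain ⟨j, rfl⟩ := h.2.1 y hy
    rcases lt_trichotomy i j with hij | rfl | hij
    · exact Or.inl ((h.2.2 i j).mp hij)
    · exact absurd rfl hne
    · exact Or.inr ((h.2.2 j i).mp hij)

end IsSortedEnum

theorem StrictLinearOn.exists_isSortedEnum {R : V → V → Prop} {S : Finset V}
    (h : StrictLinearOn R S) : ∃ e : Fin S.card → V, IsSortedEnum R S e := by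
  let r : S → S → Prop := fun a b => R a b
  have : IsStrictTotalOrder S r :=
    { irrefl := fun a => h.1 a a.2
      trans := fun a b c => h.2.1 a a.2 b b.2 c c.2
      trichotomous := fun a b hab hba => by
        by_contra hne
        rcases h.2.2 a a.2 b b.2 (fun e => hne (Subtype.ext e)) with h' | h'
        exacts [hab h', hba h'] }
  let : LinearOrder S := linearOrderOfSTO r
  let f : Fin S.card ≃o S := Fintype.orderIsoFinOfCardEq S (by simp)
  exact ⟨fun i => f i, fun i => (f i).2, fun x hx => ⟨f.symm ⟨x, hx⟩, by simp⟩,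
    fun i j => f.lt_iff_lt.symm⟩

theorem eq_of_lt_iff_lt {n : ℕ} (f : Fin n → Fin n) (g : Equiv.Perm (Fin n))
    (h : ∀ i j, f i < f j ↔ g i < g j) : ⇑g = f := by
  have hmono : StrictMono (fun a => f (g.symm a)) := fun a b hab => by
    rw [h, Equiv.apply_symm_apply, Equiv.apply_symm_apply]
    exact hab
  funext i
  simpa using (hmono.apply_eq (x := g i)).symm

end LinearOrders

section Biorders

variable {V : Type*} {P Q R : V → V → Prop} {S : Finset V} {n : ℕ}

theorem biorderPerm_iff {ρ : Equiv.Perm (Fin n)} :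
    BiorderPerm P Q ↑S ρ ↔ ∃ e : Fin n → V, IsSortedEnum P S e ∧ ∀ i j, ρ i < ρ j ↔ Q (e i) (e j) :=
  ⟨fun ⟨e, h1, h2, h3, h4⟩ => ⟨e, ⟨h1, h2, h3⟩, h4⟩,
    fun ⟨e, ⟨h1, h2, h3⟩, h4⟩ => ⟨e, h1, h2, h3, h4⟩⟩

namespace BiorderPerm

variable {ρ ρ' : Equiv.Perm (Fin n)}

theorem card_eq (h : BiorderPerm P Q ↑S ρ) : n = S.card := by
  obtain ⟨e, he, -⟩ := biorderPerm_iff.mp h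
  exact he.card_eq

theorem strictLinearOn (h : BiorderPerm P Q ↑S ρ) : StrictLinearOn P S ∧ StrictLinearOn Q S := by
  obtain ⟨e, he, hq⟩ := biorderPerm_iff.mp h
  have heQ : IsSortedEnum Q S (e ∘ ρ.symm) := by
    refine ⟨fun i => he.1 _, fun x hx => ?_, fun i j => ?_⟩
    · obtain ⟨i, rfl⟩ := he.2.1 x hx
      exact ⟨ρ i, by simp⟩
    · simpa using hq (ρ.symm i) (ρ.symm j)
  exact ⟨he.strictLinearOn, heQ.strictLinearOn⟩

theorem unique (h : BiorderPerm P Q ↑S ρ) (h' : BiorderPerm P Q ↑S ρ') : ρ = ρ' := by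
  obtain ⟨e, he, hq⟩ := biorderPerm_iff.mp h
  obtain ⟨e', he', hq'⟩ := biorderPerm_iff.mp h'
  obtain rfl := he.unique he'
  exact Equiv.ext (congrFun (eq_of_lt_iff_lt ρ' ρ fun i j => (hq' i j).trans (hq i j).symm))

theorem mul {ρa ρb : Equiv.Perm (Fin n)} (ha : BiorderPerm P Q ↑S ρa)
    (hb : BiorderPerm Q R ↑S ρb) : BiorderPerm P R ↑S (ρb * ρa) := by
  obtain ⟨ea, hea, hqa⟩ := biorderPerm_iff.mp ha
  obtain ⟨eb, heb, hrb⟩ := biorderPerm_iff.mp hb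
  choose idx hidx using fun i => heb.2.1 (ea i) (hea.1 i)
  -- `ea` lists `S` along `P` and `eb` along `Q`, so `ρa` is the passage from one to the other
  have hρa : ⇑ρa = idx := eq_of_lt_iff_lt idx ρa fun i j => by rw [heb.2.2, hidx, hidx, hqa]
  refine biorderPerm_iff.mpr ⟨ea, hea, fun i j => ?_⟩
  rw [Equiv.Perm.mul_apply, Equiv.Perm.mul_apply, hrb, hρa, hidx, hidx]

/-- The pattern of `ρ` at the positions that `e` assigns to `S'` is the biorder on `S'`. -/
theorem restrict {e : Fin n → V} (he : IsSortedEnum P S e) (hq : ∀ i j, ρ i < ρ j ↔ Q (e i) (e j))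
    {S' : Finset V} (hS' : S' ⊆ S) {m : ℕ} {ρ' : Equiv.Perm (Fin m)}
    (h' : BiorderPerm P Q ↑S' ρ') :
    BiorderPerm (· < ·) (fun a b => ρ a < ρ b) {k | e k ∈ S'} ρ' := by
  obtain ⟨e', he', hq'⟩ := biorderPerm_iff.mp h'
  choose idx hidx using fun a => he.2.1 (e' a) (hS' (he'.1 a))
  refine ⟨idx, fun a => ?_, fun k hk => ?_, fun a b => ?_, fun a b => ?_⟩
  · simpa [hidx] using he'.1 a
  · obtain ⟨a, ha⟩ := he'.2.1 (e k) hk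
    exact ⟨a, he.injective (by rw [hidx, ha])⟩
  · show a < b ↔ idx a < idx b
    rw [he'.2.2, he.2.2, hidx, hidx]
  · show ρ' a < ρ' b ↔ ρ (idx a) < ρ (idx b)
    rw [hq', hq, hidx, hidx]

theorem isPattern {m : ℕ} {X : Set (Fin n)} {ρ' : Equiv.Perm (Fin m)}
    (h : BiorderPerm (· < ·) (fun a b => ρ a < ρ b) X ρ') : IsPattern ρ' ρ := by
  obtain ⟨e, -, -, hlt, hρ⟩ := h
  exact ⟨e, fun i j hij => (hlt i j).mp hij, hρ⟩

end BiorderPerm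

theorem exists_biorderPerm (hP : StrictLinearOn P S) (hQ : StrictLinearOn Q S) :
    ∃ ρ : Equiv.Perm (Fin S.card), BiorderPerm P Q ↑S ρ := by
  obtain ⟨eP, heP⟩ := hP.exists_isSortedEnum
  obtain ⟨eQ, heQ⟩ := hQ.exists_isSortedEnum
  choose idx hidx using fun i => heQ.2.1 (eP i) (heP.1 i)
  have hinj : Function.Injective idx := fun a b hab => heP.injective (by rw [← hidx, hab, hidx])
  refine ⟨Equiv.ofBijective idx (Finite.injective_iff_bijective.mp hinj),
    biorderPerm_iff.mpr ⟨eP, heP, fun i j => ?_⟩⟩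
  rw [Equiv.ofBijective_apply, Equiv.ofBijective_apply, heQ.2.2, hidx, hidx]

end Biorders

section Realizes

variable {V : Type*} {C D : PermClass} {P Q R A B : V → V → Prop} {S : Finset V}

def PermClass.Realizes (C : PermClass) (P Q : V → V → Prop) (S : Finset V) : Prop :=
  ∃ (n : ℕ) (ρ : Equiv.Perm (Fin n)), BiorderPerm P Q ↑S ρ ∧ C n ρ

namespace PermClass.Realizes

theorem strictLinearOn (h : C.Realizes P Q S) : StrictLinearOn P S ∧ StrictLinearOn Q S :=
  let ⟨_, _, hρ, _⟩ := h
  hρ.strictLinearOn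

theorem mem {n : ℕ} {σ : Equiv.Perm (Fin n)} (h : C.Realizes P Q S)
    (hσ : BiorderPerm P Q ↑S σ) : C n σ := by
  obtain ⟨m, ρ, hρ, hC⟩ := h
  obtain rfl : m = n := hρ.card_eq.trans hσ.card_eq.symm
  exact hρ.unique hσ ▸ hC

theorem comp (h₂ : C.Realizes Q R S) (h₁ : D.Realizes P Q S) : (C.comp D).Realizes P R S := by
  obtain ⟨n, ρ₁, hρ₁, hC₁⟩ := h₁
  obtain ⟨m, ρ₂, hρ₂, hC₂⟩ := h₂
  obtain rfl : m = n := hρ₂.card_eq.trans hρ₁.card_eq.symm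
  exact ⟨_, ρ₂ * ρ₁, hρ₁.mul hρ₂, ρ₂, ρ₁, hC₂, hC₁, rfl⟩

theorem congr {P' Q' : V → V → Prop} (hP : ∀ x ∈ S, ∀ y ∈ S, (P x y ↔ P' x y))
    (hQ : ∀ x ∈ S, ∀ y ∈ S, (Q x y ↔ Q' x y)) (h : C.Realizes P Q S) : C.Realizes P' Q' S := by
  obtain ⟨n, ρ, hρ, hC⟩ := h
  obtain ⟨e, he, hq⟩ := biorderPerm_iff.mp hρ
  refine ⟨n, ρ, biorderPerm_iff.mpr ⟨e, ⟨he.1, he.2.1, fun i j => ?_⟩, fun i j => ?_⟩, hC⟩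
  · rw [he.2.2, hP _ (he.1 i) _ (he.1 j)]
  · rw [hq, hQ _ (he.1 i) _ (he.1 j)]

theorem swap (hinv : ClosedUnderInverse C) (h : C.Realizes P Q S) : C.Realizes Q P S := by
  obtain ⟨n, ρ, hρ, hC⟩ := h
  obtain ⟨e, he, hq⟩ := biorderPerm_iff.mp hρ
  refine ⟨n, ρ⁻¹, biorderPerm_iff.mpr ⟨e ∘ ⇑ρ⁻¹, ⟨fun i => he.1 _, fun x hx => ?_, fun i j => ?_⟩,
    fun i j => he.2.2 (ρ⁻¹ i) (ρ⁻¹ j)⟩, hinv n ρ hC⟩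
  · obtain ⟨i, rfl⟩ := he.2.1 x hx
    exact ⟨ρ i, by simp⟩
  · simpa using hq (ρ⁻¹ i) (ρ⁻¹ j)

theorem mono (hpat : ClosedUnderPatterns C) {S' : Finset V} (hS' : S' ⊆ S)
    (h : C.Realizes P Q S) : C.Realizes P Q S' := by
  obtain ⟨n, ρ, hρ, hC⟩ := h
  obtain ⟨e, he, hq⟩ := biorderPerm_iff.mp hρ
  obtain ⟨ρ', hρ'⟩ := exists_biorderPerm (hρ.strictLinearOn.1.mono hS')
    (hρ.strictLinearOn.2.mono hS')
  exact ⟨_, ρ', hρ', hpat _ _ ρ' ρ (BiorderPerm.restrict he hq hS' hρ').isPattern hC⟩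

theorem comap {P' Q' : V → V → Prop} (r : V → V) (hinj : Set.InjOn r S)
    (hP : ∀ x ∈ S, ∀ y ∈ S, (P' x y ↔ P (r x) (r y)))
    (hQ : ∀ x ∈ S, ∀ y ∈ S, (Q' x y ↔ Q (r x) (r y)))
    (h : C.Realizes P Q (S.image r)) : C.Realizes P' Q' S := by
  obtain ⟨n, ρ, hρ, hC⟩ := h
  obtain ⟨e, he, hq⟩ := biorderPerm_iff.mp hρ
  choose e' he'S he' using fun i => Finset.mem_image.mp (he.1 i)
  refine ⟨n, ρ, biorderPerm_iff.mpr ⟨e', ⟨he'S, fun x hx => ?_, fun i j => ?_⟩, fun i j => ?_⟩, hC⟩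
  · obtain ⟨i, hi⟩ := he.2.1 (r x) (Finset.mem_image_of_mem r hx)
    exact ⟨i, hinj (he'S i) hx (by rw [he', hi])⟩
  · rw [he.2.2, hP _ (he'S i) _ (he'S j), he', he']
  · rw [hq, hQ _ (he'S i) _ (he'S j), he', he']

end PermClass.Realizes

theorem realizes_empty (hC0 : C 0 1) : C.Realizes P Q ∅ :=
  ⟨0, 1, ⟨Fin.elim0, fun i => i.elim0, fun x hx => absurd hx (Finset.notMem_empty x),
    fun i => i.elim0, fun i => i.elim0⟩, hC0⟩

theorem realizes_singleton (hC1 : C 1 1) {x : V} (hP : ¬ P x x) (hQ : ¬ Q x x) :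
    C.Realizes P Q {x} := by
  refine ⟨1, 1, ⟨fun _ => x, fun _ => Finset.mem_coe.mpr (Finset.mem_singleton_self x),
    fun y hy => ⟨0, (Finset.mem_singleton.mp hy).symm⟩, fun i j => ?_, fun i j => ?_⟩, hC1⟩ <;>
  · rw [Subsingleton.elim i j]
    simpa

theorem StrictLinearOn.of_fibres (π : V → V) (hA : StrictLinearOn A (S.image π))
    (hfib : ∀ r ∈ S.image π, StrictLinearOn P (S.filter (π · = r)))
    (hP : ∀ x ∈ S, ∀ y ∈ S, π x ≠ π y → (P x y ↔ A (π x) (π y))) : StrictLinearOn P S := by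
  have hfib' : ∀ x ∈ S, StrictLinearOn P (S.filter (π · = π x)) :=
    fun x hx => hfib _ (Finset.mem_image_of_mem π hx)
  have hmem : ∀ {x y}, x ∈ S → π x = π y → x ∈ S.filter (π · = π y) :=
    fun hx h => Finset.mem_filter.mpr ⟨hx, h⟩
  have him : ∀ {x}, x ∈ S → π x ∈ S.image π := Finset.mem_image_of_mem π
  refine ⟨fun x hx => (hfib' x hx).1 x (hmem hx rfl), ?_, ?_⟩
  · intro x hx y hy z hz hxy hyz
    by_cases hxz : π x = π z
    · by_cases hyz' : π y = π z
      · exact (hfib' z hz).2.1 x (hmem hx hxz) y (hmem hy hyz') z (hmem hz rfl) hxy hyz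
      · rw [hP y hy z hz hyz', ← hxz] at hyz
        have hxy' : π x ≠ π y := fun h => hyz' (h ▸ hxz)
        rw [hP x hx y hy hxy'] at hxy
        exact absurd (hA.2.1 _ (him hx) _ (him hy) _ (him hx) hxy hyz) (hA.1 _ (him hx))
    · rw [hP x hx z hz hxz]
      by_cases hxy' : π x = π y
      · rwa [hP y hy z hz (hxy' ▸ hxz), ← hxy'] at hyz
      · by_cases hyz' : π y = π z
        · rwa [hP x hx y hy hxy', hyz'] at hxy
        · rw [hP x hx y hy hxy'] at hxy
          rw [hP y hy z hz hyz'] at hyz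
          exact hA.2.1 _ (him hx) _ (him hy) _ (him hz) hxy hyz
  · intro x hx y hy hne
    by_cases hxy : π x = π y
    · exact (hfib' y hy).2.2 x (hmem hx hxy) y (hmem hy rfl) hne
    · rw [hP x hx y hy hxy, hP y hy x hx (Ne.symm hxy)]
      exact hA.2.2 _ (him hx) _ (him hy) hxy

/-- Substitution along `π`: the biorder `(P, Q)` on `S` is the inflation of the biorder
`(A, B)` on the image of `π` by the biorders on the fibres of `π`. -/
theorem PermClass.Realizes.of_fibres (hsub : ClosedUnderSubstitution C) (π : V → V)
    (htop : C.Realizes A B (S.image π))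
    (hP : ∀ x ∈ S, ∀ y ∈ S, π x ≠ π y → (P x y ↔ A (π x) (π y)))
    (hQ : ∀ x ∈ S, ∀ y ∈ S, π x ≠ π y → (Q x y ↔ B (π x) (π y)))
    (hfib : ∀ r ∈ S.image π, C.Realizes P Q (S.filter (π · = r))) : C.Realizes P Q S := by
  obtain ⟨m, τ, hτ, hCτ⟩ := htop
  obtain ⟨e, he, heB⟩ := biorderPerm_iff.mp hτ
  choose ns ρblk hρblk hCblk using fun i => hfib _ (he.1 i)
  obtain ⟨ρ, hρ⟩ := exists_biorderPerm
    (StrictLinearOn.of_fibres π hτ.strictLinearOn.1 (fun r hr => (hfib r hr).strictLinearOn.1) hP)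
    (StrictLinearOn.of_fibres π hτ.strictLinearOn.2 (fun r hr => (hfib r hr).strictLinearOn.2) hQ)
  obtain ⟨eP, heP, hqP⟩ := biorderPerm_iff.mp hρ
  choose g hg using fun k => he.2.1 (π (eP k)) (Finset.mem_image_of_mem π (heP.1 k))
  have hπ : ∀ k l, g k ≠ g l → π (eP k) ≠ π (eP l) :=
    fun k l hkl h => hkl (he.injective (by rw [hg, hg, h]))
  refine ⟨_, ρ, hρ, hsub m τ ns ρblk _ ρ hCτ hCblk ⟨g, ?_, ?_, ?_, ?_⟩⟩
  · intro k l hkl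
    by_cases hgkl : g k = g l
    · exact hgkl.le
    have hP' := hP _ (heP.1 k) _ (heP.1 l) (hπ k l hgkl)
    rw [← heP.2.2, ← hg, ← hg, ← he.2.2] at hP'
    exact (hP'.mp (lt_of_le_of_ne hkl fun h => hgkl (h ▸ rfl))).le
  · intro i
    obtain ⟨x, hx, hxi⟩ := Finset.mem_image.mp (he.1 i)
    obtain ⟨k, rfl⟩ := heP.2.1 x hx
    exact ⟨k, he.injective (by rw [hg, hxi])⟩
  · intro i
    convert BiorderPerm.restrict heP hqP (Finset.filter_subset _ S) (hρblk i) using 2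
    ext k
    simp only [Finset.mem_filter, heP.1 k, true_and, ← hg]
    exact he.injective.eq_iff.symm
  · intro k l hkl
    rw [hqP, hQ _ (heP.1 k) _ (heP.1 l) (hπ k l hkl), ← hg, ← hg, heB]

theorem ClosedUnderPatterns.one_mem (hpat : ClosedUnderPatterns C) {m k : ℕ}
    {τ : Equiv.Perm (Fin m)} (hτ : C m τ) (hk : k ≤ 1) (hkm : k ≤ m) : C k 1 := by
  have : Subsingleton (Fin k) := Fin.subsingleton_iff_le_one.mpr hk
  refine hpat k m 1 τ ⟨Fin.castLE hkm, fun i j hij => absurd (Subsingleton.elim i j) hij.ne,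
    fun i j => ?_⟩ hτ
  rw [Subsingleton.elim i j, lt_self_iff_false, lt_self_iff_false]

end Realizes

namespace PreDTree

variable {V : Type*} {T : PreDTree V}

section Ancestors

theorem anc_refl (u : V) : T.anc u u := ⟨0, rfl⟩

theorem anc_trans {u v w : V} (h₁ : T.anc u v) (h₂ : T.anc v w) : T.anc u w := by
  obtain ⟨k, rfl⟩ := h₁
  obtain ⟨l, rfl⟩ := h₂
  exact ⟨k + l, Function.iterate_add_apply _ _ _ _⟩

theorem anc_parent (u : V) : T.anc (T.parent u) u := ⟨1, rfl⟩

theorem anc_of_isChild {u t : V} (h : T.isChild u t) : T.anc t u := h.1 ▸ anc_parent u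

theorem anc_of_isGrandchild {w t : V} (h : T.isGrandchild w t) : T.anc t w :=
  anc_trans (anc_of_isChild h.2) (anc_of_isChild h.1)

theorem eq_of_isLeaf_of_anc {x y : V} (hx : T.isLeaf x) (h : T.anc x y) : y = x := by
  obtain ⟨k, hk⟩ := h
  induction k generalizing y with
  | zero => exact hk
  | succ k ih => exact ih (hx _ (by rwa [Function.iterate_succ_apply'] at hk))

theorem not_isLeaf_of_isChild {u t : V} (h : T.isChild u t) : ¬ T.isLeaf t :=
  fun hl => h.2 (hl u h.1)

theorem exists_isChild_of_not_isLeaf {t : V} (h : ¬ T.isLeaf t) : ∃ u, T.isChild u t := by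
  simp only [isLeaf, not_forall] at h
  obtain ⟨u, hu, hne⟩ := h
  exact ⟨u, hu, hne⟩

theorem eq_root_of_depth_eq_zero (hT : IsDelayedTree T) {v : V} (h : T.depth v = 0) :
    v = T.root := by
  by_contra hv
  have := hT.depth_parent v hv
  omega

theorem depth_iterate_parent (hT : IsDelayedTree T) {k : ℕ} {v : V} (hk : k ≤ T.depth v) :
    T.depth (T.parent^[k] v) = T.depth v - k := by
  induction k generalizing v with
  | zero => rfl
  | succ k ih =>
    have hv : v ≠ T.root := fun h => by rw [h, hT.depth_root] at hk; omega
    have := hT.depth_parent v hv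
    rw [Function.iterate_succ_apply, ih (by omega)]
    omega

theorem iterate_parent_eq_root (hT : IsDelayedTree T) {k : ℕ} {v : V} (hk : T.depth v ≤ k) :
    T.parent^[k] v = T.root := by
  induction k generalizing v with
  | zero => exact eq_root_of_depth_eq_zero hT (Nat.le_zero.mp hk)
  | succ k ih =>
    by_cases hv : v = T.root
    · subst hv
      exact Function.iterate_fixed hT.parent_root _
    · have := hT.depth_parent v hv
      rw [Function.iterate_succ_apply]
      exact ih (by omega)

theorem anc_root (hT : IsDelayedTree T) (v : V) : T.anc T.root v := ⟨T.depth v,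
    iterate_parent_eq_root hT le_rfl⟩

theorem depth_le_of_anc (hT : IsDelayedTree T) {u v : V} (h : T.anc u v) :
    T.depth u ≤ T.depth v := by
  obtain ⟨k, rfl⟩ := h
  by_cases hk : k ≤ T.depth v
  · rw [depth_iterate_parent hT hk]; omega
  · rw [iterate_parent_eq_root hT (by omega), hT.depth_root]; omega

theorem iterate_depth_sub_of_anc (hT : IsDelayedTree T) {u v : V} (h : T.anc u v) :
    T.parent^[T.depth v - T.depth u] v = u := by
  obtain ⟨k, rfl⟩ := h
  by_cases hk : k ≤ T.depth v
  · rw [depth_iterate_parent hT hk, show T.depth v - (T.depth v - k) = k by omega]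
  · rw [iterate_parent_eq_root hT (k := k) (by omega), hT.depth_root]
    exact iterate_parent_eq_root hT (by omega)

theorem eq_of_anc_of_depth_eq (hT : IsDelayedTree T) {u w v : V} (hu : T.anc u v) (hw : T.anc w v)
    (hd : T.depth u = T.depth w) : u = w := by
  rw [← iterate_depth_sub_of_anc hT hu, ← iterate_depth_sub_of_anc hT hw, hd]

theorem anc_antisymm (hT : IsDelayedTree T) {u v : V} (h₁ : T.anc u v) (h₂ : T.anc v u) : u = v :=
  eq_of_anc_of_depth_eq hT h₁ (anc_refl v)
    (le_antisymm (depth_le_of_anc hT h₁) (depth_le_of_anc hT h₂))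

theorem anc_of_anc_of_depth_le (hT : IsDelayedTree T) {u w x : V} (hu : T.anc u x) (hw : T.anc w x)
    (hd : T.depth u ≤ T.depth w) : T.anc u w := by
  have h := iterate_depth_sub_of_anc hT hu
  rw [show T.depth x - T.depth u = (T.depth w - T.depth u) + (T.depth x - T.depth w) by
      have := depth_le_of_anc hT hw; omega,
    Function.iterate_add_apply, iterate_depth_sub_of_anc hT hw] at h
  exact ⟨_, h⟩

theorem depth_lt_of_anc (hT : IsDelayedTree T) {g x : V} (h : T.anc g x) (hne : x ≠ g) :
    T.depth g < T.depth x :=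
  lt_of_le_of_ne (depth_le_of_anc hT h) fun hd =>
    hne (eq_of_anc_of_depth_eq hT h (anc_refl x) hd).symm

theorem depth_of_isChild (hT : IsDelayedTree T) {u t : V} (h : T.isChild u t) :
    T.depth u = T.depth t + 1 := by
  have hu : u ≠ T.root := fun hu => h.2 (by rw [← h.1, hu, hT.parent_root])
  have := hT.depth_parent u hu
  rw [h.1] at this
  omega

theorem depth_of_isGrandchild (hT : IsDelayedTree T) {w t : V} (h : T.isGrandchild w t) :
    T.depth w = T.depth t + 2 := by
  rw [depth_of_isChild hT h.1, depth_of_isChild hT h.2]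

theorem isChild_parent (hT : IsDelayedTree T) {t : V} (h : t ≠ T.root) : T.isChild t (T.parent t) :=
  ⟨rfl, fun hh => by have := hT.depth_parent t h; rw [← hh] at this; omega⟩

end Ancestors

section Toward

/-- The child of `t` above `x` (junk unless `t` is a proper ancestor of `x`). -/
def childToward (T : PreDTree V) (t x : V) : V :=
  T.parent^[T.depth x - T.depth t - 1] x

def grandchildToward (T : PreDTree V) (t x : V) : V :=
  T.parent^[T.depth x - T.depth t - 2] x

theorem anc_childToward (t x : V) : T.anc (T.childToward t x) x := ⟨_, rfl⟩

theorem anc_grandchildToward (t x : V) : T.anc (T.grandchildToward t x) x := ⟨_, rfl⟩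

theorem isChild_childToward (hT : IsDelayedTree T) {t x : V} (ha : T.anc t x)
    (hd : T.depth t < T.depth x) : T.isChild (T.childToward t x) t := by
  have hdepth : T.depth (T.childToward t x) = T.depth t + 1 := by
    rw [childToward, depth_iterate_parent hT (by omega)]; omega
  refine ⟨?_, fun h => by rw [h] at hdepth; omega⟩
  rw [childToward, ← Function.iterate_succ_apply' T.parent,
    show (T.depth x - T.depth t - 1).succ = T.depth x - T.depth t by omega]
  exact iterate_depth_sub_of_anc hT ha

theorem parent_grandchildToward {t x : V} (hd : T.depth t + 2 ≤ T.depth x) :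
    T.parent (T.grandchildToward t x) = T.childToward t x := by
  rw [grandchildToward, childToward, ← Function.iterate_succ_apply' T.parent,
    show (T.depth x - T.depth t - 2).succ = T.depth x - T.depth t - 1 by omega]

theorem isGrandchild_grandchildToward (hT : IsDelayedTree T) {t x : V} (ha : T.anc t x)
    (hd : T.depth t + 2 ≤ T.depth x) : T.isGrandchild (T.grandchildToward t x) t := by
  have hc := isChild_childToward hT ha (by omega)
  rw [isGrandchild, parent_grandchildToward hd]
  refine ⟨⟨parent_grandchildToward hd, fun h => ?_⟩, hc⟩
  have := depth_of_isChild hT hc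
  rw [← h, grandchildToward, depth_iterate_parent hT (by omega)] at this
  omega

theorem childToward_eq (hT : IsDelayedTree T) {t u x : V} (hu : T.isChild u t) (hux : T.anc u x) :
    T.childToward t x = u := by
  have hdu := depth_of_isChild hT hu
  have hdx := depth_le_of_anc hT hux
  refine eq_of_anc_of_depth_eq hT (anc_childToward t x) hux ?_
  rw [childToward, depth_iterate_parent hT (by omega)]
  omega

theorem grandchildToward_eq (hT : IsDelayedTree T) {t w x : V} (hw : T.isGrandchild w t)
    (hwx : T.anc w x) : T.grandchildToward t x = w := by
  have hdw := depth_of_isGrandchild hT hw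
  have hdx := depth_le_of_anc hT hwx
  refine eq_of_anc_of_depth_eq hT (anc_grandchildToward t x) hwx ?_
  rw [grandchildToward, depth_iterate_parent hT (by omega)]
  omega

end Toward

section Leaves

variable [Fintype V]

noncomputable def leafFinset (T : PreDTree V) (t : V) : Finset V :=
  Finset.univ.filter fun x => T.isLeaf x ∧ T.anc t x

noncomputable def children (T : PreDTree V) (t : V) : Finset V :=
  Finset.univ.filter fun u => T.isChild u t

noncomputable def grandchildren (T : PreDTree V) (t : V) : Finset V :=
  Finset.univ.filter fun w => T.isGrandchild w t

/-- The termination measure for recursion down the tree. -/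
noncomputable def descCount (T : PreDTree V) (t : V) : ℕ :=
  (Finset.univ.filter fun w => T.anc t w ∧ w ≠ t).card

@[simp]
theorem mem_leafFinset {t x : V} : x ∈ T.leafFinset t ↔ T.isLeaf x ∧ T.anc t x := by
  simp [leafFinset]

@[simp]
theorem mem_children {t u : V} : u ∈ T.children t ↔ T.isChild u t := by simp [children]

@[simp]
theorem mem_grandchildren {t w : V} : w ∈ T.grandchildren t ↔ T.isGrandchild w t := by
  simp [grandchildren]

theorem coe_leafFinset (t : V) : (T.leafFinset t : Set V) = T.leavesBelow t := by
  ext x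
  simp [leavesBelow]

theorem mem_leavesBelow {t x : V} : x ∈ T.leavesBelow t ↔ x ∈ T.leafFinset t := by
  rw [← coe_leafFinset, Finset.mem_coe]

theorem descCount_lt (hT : IsDelayedTree T) {t w : V} (h : T.anc t w) (hne : w ≠ t) :
    T.descCount w < T.descCount t := by
  refine Finset.card_lt_card ⟨fun z hz => ?_, fun hsub => ?_⟩
  · simp only [Finset.mem_filter, Finset.mem_univ, true_and] at hz ⊢
    exact ⟨anc_trans h hz.1, fun hzt => hne (anc_antisymm hT (hzt ▸ hz.1) h)⟩
  · simpa using hsub (Finset.mem_filter.mpr ⟨Finset.mem_univ w, h, hne⟩)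

theorem descCount_lt_of_isChild (hT : IsDelayedTree T) {u t : V} (h : T.isChild u t) :
    T.descCount u < T.descCount t :=
  descCount_lt hT (anc_of_isChild h) h.2

theorem descCount_lt_of_isGrandchild (hT : IsDelayedTree T) {w t : V} (h : T.isGrandchild w t) :
    T.descCount w < T.descCount t :=
  (descCount_lt_of_isChild hT h.1).trans (descCount_lt_of_isChild hT h.2)

theorem leafFinset_nonempty (hT : IsDelayedTree T) (t : V) : (T.leafFinset t).Nonempty := by
  -- a deepest descendant of `t` is a leaf
  obtain ⟨x, hx, hmax⟩ := (Finset.univ.filter (T.anc t)).exists_max_image T.depth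
    ⟨t, by simp [anc_refl]⟩
  simp only [Finset.mem_filter, Finset.mem_univ, true_and] at hx hmax
  refine ⟨x, mem_leafFinset.mpr ⟨fun u hu => ?_, hx⟩⟩
  by_contra hne
  have := hmax u (anc_trans hx (hu ▸ anc_parent u))
  rw [depth_of_isChild hT ⟨hu, hne⟩] at this
  omega

theorem leafFinset_subset_of_anc {u w : V} (h : T.anc u w) : T.leafFinset w ⊆ T.leafFinset u :=
  fun _ hx => mem_leafFinset.mpr ⟨(mem_leafFinset.mp hx).1, anc_trans h (mem_leafFinset.mp hx).2⟩

theorem disjoint_leafFinset (hT : IsDelayedTree T) {u w : V} (hd : T.depth u = T.depth w)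
    (hne : u ≠ w) : Disjoint (T.leafFinset u) (T.leafFinset w) :=
  Finset.disjoint_left.mpr fun _ hx hx' =>
    hne (eq_of_anc_of_depth_eq hT (mem_leafFinset.mp hx).2 (mem_leafFinset.mp hx').2 hd)

theorem leafFinset_of_isLeaf {t : V} (h : T.isLeaf t) : T.leafFinset t = {t} := by
  ext x
  simp only [mem_leafFinset, Finset.mem_singleton]
  refine ⟨fun hx => eq_of_isLeaf_of_anc h hx.2, ?_⟩
  rintro rfl
  exact ⟨h, anc_refl x⟩

theorem leafFinset_eq_biUnion_children (hT : IsDelayedTree T) {t : V} (ht : ¬ T.isLeaf t) :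
    T.leafFinset t = (T.children t).biUnion T.leafFinset := by
  ext x
  simp only [Finset.mem_biUnion, mem_leafFinset, mem_children]
  refine ⟨fun ⟨hl, ha⟩ => ?_, fun ⟨u, hu, hl, ha⟩ => ⟨hl, anc_trans (anc_of_isChild hu) ha⟩⟩
  have hd := depth_lt_of_anc hT ha fun h => ht (h ▸ hl)
  exact ⟨_, isChild_childToward hT ha hd, hl, anc_childToward t x⟩

theorem not_isLeaf_of_mem_children (hT : IsDelayedTree T) {t u : V}
    (hgc : (T.grandchildren t).Nonempty) (hu : u ∈ T.children t) : ¬ T.isLeaf u := by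
  intro hl
  obtain ⟨w, hw⟩ := hgc
  rw [mem_grandchildren] at hw
  rw [mem_children] at hu
  have hpw : T.parent w = u := hT.leaf_only_child u (T.parent w) hl (by rw [hu.1]; exact hw.2)
  exact hw.1.2 (by rw [hpw, hl w hpw])

theorem leafFinset_eq_biUnion_grandchildren (hT : IsDelayedTree T) {t : V}
    (hgc : (T.grandchildren t).Nonempty) :
    T.leafFinset t = (T.grandchildren t).biUnion T.leafFinset := by
  have ht : ¬ T.isLeaf t := by
    obtain ⟨w, hw⟩ := hgc
    exact not_isLeaf_of_isChild (mem_grandchildren.mp hw).2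
  rw [leafFinset_eq_biUnion_children hT ht]
  ext x
  simp only [Finset.mem_biUnion]
  constructor
  · rintro ⟨u, hu, hx⟩
    rw [leafFinset_eq_biUnion_children hT (not_isLeaf_of_mem_children hT hgc hu),
      Finset.mem_biUnion] at hx
    obtain ⟨w, hw, hx⟩ := hx
    rw [mem_children] at hu hw
    exact ⟨w, mem_grandchildren.mpr ⟨hw.1 ▸ hw, hw.1 ▸ hu⟩, hx⟩
  · rintro ⟨w, hw, hx⟩
    have hw := mem_grandchildren.mp hw
    exact ⟨_, mem_children.mpr hw.2, leafFinset_subset_of_anc (anc_of_isChild hw.1) hx⟩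

theorem exists_leafFinset_eq_singleton (hT : IsDelayedTree T) {t : V}
    (hgc : T.grandchildren t = ∅) : ∃ c, T.isLeaf c ∧ T.leafFinset t = {c} := by
  by_cases ht : T.isLeaf t
  · exact ⟨t, ht, leafFinset_of_isLeaf ht⟩
  obtain ⟨u, hu⟩ := exists_isChild_of_not_isLeaf ht
  have hul : T.isLeaf u := by
    by_contra hul
    obtain ⟨c, hc⟩ := exists_isChild_of_not_isLeaf hul
    have : c ∈ T.grandchildren t := mem_grandchildren.mpr ⟨hc.1 ▸ hc, hc.1 ▸ hu⟩
    simp [hgc] at this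
  have honly : T.children t = {u} := by
    ext v
    simp only [mem_children, Finset.mem_singleton]
    exact ⟨fun hv => hT.leaf_only_child u v hul (by rw [hu.1]; exact hv), fun hv => hv ▸ hu⟩
  exact ⟨u, hul, by rw [leafFinset_eq_biUnion_children hT ht, honly, Finset.singleton_biUnion,
    leafFinset_of_isLeaf hul]⟩

theorem grandchildren_nonempty (hT : IsDelayedTree T) {t : V} (h : 1 < (T.leafFinset t).card) :
    (T.grandchildren t).Nonempty := by
  by_contra hgc
  obtain ⟨c, -, hc⟩ := exists_leafFinset_eq_singleton hT (Finset.not_nonempty_iff_eq_empty.mp hgc)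
  simp [hc] at h

end Leaves

section LeafOrders

theorem nodeLLT_irrefl (hT : IsDelayedTree T) (u : V) : ¬ T.nodeLLT u u := by
  rintro ⟨⟨z, hz⟩, -, h⟩
  exact hT.llt_irrefl z (h z hz z hz)

theorem depth_le_of_split (hT : IsDelayedTree T) {t u v x y w : V} (hu : T.isChild u t)
    (hv : T.isChild v t) (huv : u ≠ v) (hux : T.anc u x) (hvy : T.anc v y) (hwx : T.anc w x)
    (hwy : T.anc w y) : T.depth w ≤ T.depth t := by
  by_contra! hlt
  have hdu := depth_of_isChild hT hu
  have hdv := depth_of_isChild hT hv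
  exact huv (eq_of_anc_of_depth_eq hT (anc_of_anc_of_depth_le hT hux hwx (by omega))
    (anc_of_anc_of_depth_le hT hvy hwy (by omega)) (by omega))

theorem eq_of_splits (hT : IsDelayedTree T) {t t' u v u' v' x y : V} (hu : T.isChild u t)
    (hv : T.isChild v t) (huv : u ≠ v) (hux : T.anc u x) (hvy : T.anc v y)
    (hu' : T.isChild u' t') (hv' : T.isChild v' t') (huv' : u' ≠ v') (hux' : T.anc u' x)
    (hvy' : T.anc v' y) : t = t' := by
  have htx := anc_trans (anc_of_isChild hu) hux
  have ht'x := anc_trans (anc_of_isChild hu') hux'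
  have ht'y := anc_trans (anc_of_isChild hv') hvy'
  have hty := anc_trans (anc_of_isChild hv) hvy
  exact eq_of_anc_of_depth_eq hT htx ht'x (le_antisymm
    (depth_le_of_split hT hu' hv' huv' hux' hvy' htx hty)
    (depth_le_of_split hT hu hv huv hux hvy ht'x ht'y))

theorem realLT_iff_pre (hT : IsDelayedTree T) {t g₁ g₂ x y : V} (hg₁ : T.isGrandchild g₁ t)
    (hg₂ : T.isGrandchild g₂ t) (hp : T.parent g₁ ≠ T.parent g₂) (hx : T.anc g₁ x)
    (hy : T.anc g₂ y) : T.realLT x y ↔ T.pre t g₁ g₂ := by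
  refine ⟨fun ⟨t', x', y', hx', hy', hp', hxx', hyy', hpre⟩ => ?_,
    fun h => ⟨t, g₁, g₂, hg₁, hg₂, hp, hx, hy, h⟩⟩
  obtain rfl : t = t' := eq_of_splits hT hg₁.2 hg₂.2 hp (anc_trans (anc_parent g₁) hx)
    (anc_trans (anc_parent g₂) hy) hx'.2 hy'.2 hp' (anc_trans (anc_parent x') hxx')
    (anc_trans (anc_parent y') hyy')
  rwa [eq_of_anc_of_depth_eq hT hx hxx' (by rw [depth_of_isGrandchild hT hg₁,
    depth_of_isGrandchild hT hx']), eq_of_anc_of_depth_eq hT hy hyy'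
    (by rw [depth_of_isGrandchild hT hg₂, depth_of_isGrandchild hT hy'])]

variable [Fintype V]

/-- Since leaf sets are intervals of `<`, two disjoint ones are comparable as blocks. -/
theorem llt_of_llt_of_disjoint (hT : IsDelayedTree T) {u w : V}
    (hdisj : Disjoint (T.leafFinset u) (T.leafFinset w)) {x x' y y' : V}
    (hx : x ∈ T.leafFinset u) (hx' : x' ∈ T.leafFinset u) (hy : y ∈ T.leafFinset w)
    (hy' : y' ∈ T.leafFinset w) (hxy : T.llt x y) : T.llt x' y' := by
  have hne : ∀ {a b}, a ∈ T.leafFinset u → b ∈ T.leafFinset w → a ≠ b :=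
    fun ha hb h => Finset.disjoint_left.mp hdisj ha (h ▸ hb)
  have hleaf : ∀ {a t}, a ∈ T.leafFinset t → T.isLeaf a := fun h => (mem_leafFinset.mp h).1
  refine (hT.llt_total x' y' (hleaf hx') (hleaf hy') (hne hx' hy')).resolve_right fun hyx => ?_
  rcases hT.llt_total x y' (hleaf hx) (hleaf hy') (hne hx hy') with h | h
  · exact hne (mem_leavesBelow.mp (hT.llt_compatible u x (mem_leavesBelow.mpr hx) x'
      (mem_leavesBelow.mpr hx') y' h hyx)) hy' rfl
  · exact hne hx (mem_leavesBelow.mp (hT.llt_compatible w y' (mem_leavesBelow.mpr hy') y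
      (mem_leavesBelow.mpr hy) x h hxy)) rfl

theorem llt_iff_nodeLLT (hT : IsDelayedTree T) {u w : V}
    (hdisj : Disjoint (T.leafFinset u) (T.leafFinset w)) {x y : V}
    (hx : x ∈ T.leafFinset u) (hy : y ∈ T.leafFinset w) : T.llt x y ↔ T.nodeLLT u w :=
  ⟨fun h => ⟨⟨x, mem_leavesBelow.mpr hx⟩, ⟨y, mem_leavesBelow.mpr hy⟩, fun _ ha _ hb =>
      llt_of_llt_of_disjoint hT hdisj hx (mem_leavesBelow.mp ha) hy (mem_leavesBelow.mp hb) h⟩,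
    fun h => h.2.2 x (mem_leavesBelow.mpr hx) y (mem_leavesBelow.mpr hy)⟩

theorem strictLinearOn_nodeLLT (hT : IsDelayedTree T) {D : Finset V}
    (hD : ∀ u ∈ D, ∀ w ∈ D, T.depth u = T.depth w) : StrictLinearOn T.nodeLLT D := by
  refine ⟨fun u _ => nodeLLT_irrefl hT u, fun u _ w _ z _ h₁ h₂ => ?_, fun u hu w hw hne => ?_⟩
  · obtain ⟨y, hy⟩ := h₁.2.1
    exact ⟨h₁.1, h₂.2.1, fun a ha b hb => hT.llt_trans a y b (h₁.2.2 a ha y hy) (h₂.2.2 y hy b hb)⟩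
  · have hdisj := disjoint_leafFinset hT (hD u hu w hw) hne
    obtain ⟨x, hx⟩ := leafFinset_nonempty hT u
    obtain ⟨y, hy⟩ := leafFinset_nonempty hT w
    rcases hT.llt_total x y (mem_leafFinset.mp hx).1 (mem_leafFinset.mp hy).1
      (fun h => Finset.disjoint_left.mp hdisj hx (h ▸ hy)) with h | h
    · exact Or.inl ((llt_iff_nodeLLT hT hdisj hx hy).mp h)
    · exact Or.inr ((llt_iff_nodeLLT hT hdisj.symm hy hx).mp h)

theorem nodeLLT_iff_of_anc (hT : IsDelayedTree T) {u v a b : V} (hua : T.anc u a)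
    (hvb : T.anc v b) (hdisj : Disjoint (T.leafFinset u) (T.leafFinset v)) :
    T.nodeLLT a b ↔ T.nodeLLT u v := by
  obtain ⟨x, hx⟩ := leafFinset_nonempty hT a
  obtain ⟨y, hy⟩ := leafFinset_nonempty hT b
  rw [← llt_iff_nodeLLT hT hdisj (leafFinset_subset_of_anc hua hx)
    (leafFinset_subset_of_anc hvb hy)]
  exact (llt_iff_nodeLLT hT (hdisj.mono (leafFinset_subset_of_anc hua)
    (leafFinset_subset_of_anc hvb)) hx hy).symm

/-- This is where well-formedness enters: `≺` is transitive through a leaf below `z`. -/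
theorem realLT_of_pre_of_pre (hT : IsDelayedTree T) (hW : T.WellFormed) {t g₁ g₂ z : V}
    (h₁ : T.isGrandchild g₁ t) (h₂ : T.isGrandchild g₂ t) (hz : T.isGrandchild z t)
    (hpz₁ : T.parent z ≠ T.parent g₁) (hpz₂ : T.parent z ≠ T.parent g₂)
    (ha : T.pre t g₁ z) (hb : T.pre t z g₂) {x y : V} (hx : T.anc g₁ x) (hy : T.anc g₂ y) :
    T.realLT x y := by
  obtain ⟨c, hc⟩ := leafFinset_nonempty hT z
  exact hW.2.1 x c y (⟨t, g₁, z, h₁, hz, fun h => hpz₁ h.symm, hx, (mem_leafFinset.mp hc).2, ha⟩)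
    ⟨t, z, g₂, hz, h₂, hpz₂, (mem_leafFinset.mp hc).2, hy, hb⟩

end LeafOrders

section Runs

variable {t : V} {H : Finset V}

def PreBetween (T : PreDTree V) (t z a b : V) : Prop :=
  (T.pre t a z ∧ T.pre t z b) ∨ (T.pre t b z ∧ T.pre t z a)

/-- The run of `w` in `H`: the siblings of `w` in `H` that no element of `H` under another
parent separates from `w` in `≺_t`. -/
noncomputable def run (T : PreDTree V) (t : V) (H : Finset V) (w : V) : Finset V :=
  H.filter fun s => T.parent s = T.parent w ∧
    ∀ z ∈ H, T.parent z ≠ T.parent w → ¬ T.PreBetween t z s w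

noncomputable def runRep (T : PreDTree V) (t : V) (H : Finset V) (w : V) : V :=
  @Classical.epsilon V ⟨w⟩ (· ∈ T.run t H w)

theorem mem_run {w s : V} :
    s ∈ T.run t H w ↔ s ∈ H ∧ T.parent s = T.parent w ∧
      ∀ z ∈ H, T.parent z ≠ T.parent w → ¬ T.PreBetween t z s w := by
  simp [run]

theorem mem_run_self (hT : IsDelayedTree T) {w : V} (hw : w ∈ H) :
    w ∈ T.run t H w := by
  refine mem_run.mpr ⟨hw, rfl, fun z _ _ hpb => ?_⟩
  rcases hpb with ⟨h₁, h₂⟩ | ⟨h₁, h₂⟩ <;> exact hT.pre_irrefl t z (hT.pre_trans t z w z h₂ h₁)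

theorem runRep_mem_run (hT : IsDelayedTree T) {w : V} (hw : w ∈ H) :
    T.runRep t H w ∈ T.run t H w :=
  Classical.epsilon_spec ⟨w, mem_run_self hT hw⟩

theorem runRep_mem (hT : IsDelayedTree T) {w : V} (hw : w ∈ H) : T.runRep t H w ∈ H :=
  (mem_run.mp (runRep_mem_run hT hw)).1

theorem parent_runRep (hT : IsDelayedTree T) {w : V} (hw : w ∈ H) :
    T.parent (T.runRep t H w) = T.parent w :=
  (mem_run.mp (runRep_mem_run hT hw)).2.1

theorem image_runRep_subset (hT : IsDelayedTree T) : H.image (T.runRep t H) ⊆ H := fun r hr => by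
  obtain ⟨w, hw, rfl⟩ := Finset.mem_image.mp hr
  exact runRep_mem hT hw

variable [Fintype V]

theorem strictLinearOn_pre (hT : IsDelayedTree T) (t : V) :
    StrictLinearOn (T.pre t) (T.grandchildren t) :=
  ⟨fun x _ => hT.pre_irrefl t x, fun x _ y _ z _ => hT.pre_trans t x y z,
    fun x hx y hy hne => hT.pre_total t x y (mem_grandchildren.mp hx) (mem_grandchildren.mp hy) hne⟩

/-- Numbering the grandchildren of `t` along `≺_t` turns the statements about runs below into
linear arithmetic. -/
theorem exists_pos (hT : IsDelayedTree T) (t : V) :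
    ∃ pos : V → ℕ, (∀ a ∈ T.grandchildren t, ∀ b ∈ T.grandchildren t,
      (T.pre t a b ↔ pos a < pos b)) ∧ Set.InjOn pos (T.grandchildren t) := by
  obtain ⟨e, he⟩ := (strictLinearOn_pre hT t).exists_isSortedEnum
  have hidx : ∀ a ∈ T.grandchildren t, ∃ i, e i = a := he.2.1
  let pos : V → ℕ := fun a => if h : ∃ i, e i = a then (h.choose : ℕ) else 0
  have hpos : ∀ i, pos (e i) = i := fun i => by
    have h : ∃ j, e j = e i := ⟨i, rfl⟩
    simp only [pos, dif_pos h]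
    exact congrArg Fin.val (he.injective h.choose_spec)
  refine ⟨pos, fun a ha b hb => ?_, fun a ha b hb hab => ?_⟩
  · obtain ⟨i, rfl⟩ := hidx a ha
    obtain ⟨j, rfl⟩ := hidx b hb
    rw [hpos, hpos, ← he.2.2, Fin.lt_def]
  · obtain ⟨i, rfl⟩ := hidx a ha
    obtain ⟨j, rfl⟩ := hidx b hb
    rw [hpos, hpos] at hab
    rw [Fin.ext hab]

theorem preBetween_iff {pos : V → ℕ}
    (hpos : ∀ a ∈ T.grandchildren t, ∀ b ∈ T.grandchildren t, (T.pre t a b ↔ pos a < pos b))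
    {z a b : V} (hz : z ∈ T.grandchildren t) (ha : a ∈ T.grandchildren t)
    (hb : b ∈ T.grandchildren t) :
    T.PreBetween t z a b ↔ (pos a < pos z ∧ pos z < pos b) ∨ (pos b < pos z ∧ pos z < pos a) := by
  rw [PreBetween, hpos a ha z hz, hpos z hz b hb, hpos b hb z hz, hpos z hz a ha]

theorem run_eq_of_mem (hT : IsDelayedTree T) (hH : H ⊆ T.grandchildren t) {s w : V}
    (hw : w ∈ H) (hs : s ∈ T.run t H w) : T.run t H s = T.run t H w := by
  obtain ⟨pos, hpos, hinj⟩ := exists_pos hT t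
  obtain ⟨hsH, hsp, hsb⟩ := mem_run.mp hs
  have hne : ∀ {z a}, z ∈ H → a ∈ H → T.parent z ≠ T.parent a → pos z ≠ pos a :=
    fun hz ha hp h => hp (by rw [hinj (hH hz) (hH ha) h])
  ext r
  rw [mem_run, mem_run]
  refine and_congr_right fun hrH => ?_
  rw [hsp]
  refine and_congr_right fun hrp => ⟨fun hrb z hz hzp hpb => ?_, fun hrb z hz hzp hpb => ?_⟩
  · have h₁ := hrb z hz (hsp ▸ hzp)
    have h₂ := hsb z hz hzp
    rw [preBetween_iff hpos (hH hz) (hH hrH) (hH hw)] at hpb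
    rw [preBetween_iff hpos (hH hz) (hH hrH) (hH hsH)] at h₁
    rw [preBetween_iff hpos (hH hz) (hH hsH) (hH hw)] at h₂
    have := hne hz hsH (hsp ▸ hzp)
    omega
  · have h₁ := hrb z hz hzp
    have h₂ := hsb z hz hzp
    rw [preBetween_iff hpos (hH hz) (hH hrH) (hH hsH)] at hpb
    rw [preBetween_iff hpos (hH hz) (hH hrH) (hH hw)] at h₁
    rw [preBetween_iff hpos (hH hz) (hH hsH) (hH hw)] at h₂
    have := hne hz hw hzp
    omega

theorem mem_run_of_preBetween (hT : IsDelayedTree T) (hH : H ⊆ T.grandchildren t)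
    {w a b h : V} (hw : w ∈ H) (ha : a ∈ T.run t H w) (hb : b ∈ T.run t H w) (hhH : h ∈ H)
    (hpb : T.PreBetween t h a b) : h ∈ T.run t H w := by
  obtain ⟨pos, hpos, hinj⟩ := exists_pos hT t
  obtain ⟨haH, hap, hab⟩ := mem_run.mp ha
  obtain ⟨hbH, hbp, hbb⟩ := mem_run.mp hb
  have hne : ∀ {z a}, z ∈ H → a ∈ H → T.parent z ≠ T.parent a → pos z ≠ pos a :=
    fun hz ha hp h => hp (by rw [hinj (hH hz) (hH ha) h])
  rw [preBetween_iff hpos (hH hhH) (hH haH) (hH hbH)] at hpb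
  have hpar : T.parent h = T.parent w := by
    by_contra hhp
    have h₁ := hab h hhH hhp
    have h₂ := hbb h hhH hhp
    rw [preBetween_iff hpos (hH hhH) (hH haH) (hH hw)] at h₁
    rw [preBetween_iff hpos (hH hhH) (hH hbH) (hH hw)] at h₂
    have := hne hhH hw hhp
    omega
  refine mem_run.mpr ⟨hhH, hpar, fun z hz hzp hzb => ?_⟩
  have h₁ := hab z hz hzp
  have h₂ := hbb z hz hzp
  rw [preBetween_iff hpos (hH hz) (hH hhH) (hH hw)] at hzb
  rw [preBetween_iff hpos (hH hz) (hH haH) (hH hw)] at h₁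
  rw [preBetween_iff hpos (hH hz) (hH hbH) (hH hw)] at h₂
  have := hne hz hw hzp
  have := hne hz hhH (hpar ▸ hzp)
  omega

/-- Distinct runs are `≺_t`-intervals of `H`, so `≺_t` compares them as blocks. -/
theorem pre_of_run_ne (hT : IsDelayedTree T) (hH : H ⊆ T.grandchildren t)
    {w₁ w₂ a b a' b' : V} (hw₁ : w₁ ∈ H) (hw₂ : w₂ ∈ H)
    (ha : a ∈ T.run t H w₁) (hb : b ∈ T.run t H w₂)
    (ha' : a' ∈ T.run t H w₁) (hb' : b' ∈ T.run t H w₂)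
    (hne : T.run t H w₁ ≠ T.run t H w₂) (hab : T.pre t a b) : T.pre t a' b' := by
  obtain ⟨pos, hpos, hinj⟩ := exists_pos hT t
  have hmem : ∀ {r w}, r ∈ T.run t H w → r ∈ H := fun hr => (mem_run.mp hr).1
  have hdisj : ∀ {r}, r ∈ T.run t H w₁ → r ∉ T.run t H w₂ := fun hr₁ hr₂ =>
    hne ((run_eq_of_mem hT hH hw₁ hr₁).symm.trans (run_eq_of_mem hT hH hw₂ hr₂))
  by_contra hcon
  have hba' : T.pre t b' a' := ((strictLinearOn_pre hT t).2.2 a' (hH (hmem ha')) b'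
    (hH (hmem hb')) fun h => hdisj ha' (h ▸ hb')).resolve_left hcon
  rw [hpos a (hH (hmem ha)) b (hH (hmem hb))] at hab
  rw [hpos b' (hH (hmem hb')) a' (hH (hmem ha'))] at hba'
  rcases lt_or_gt_of_ne fun h => hdisj ha' (hinj (hH (hmem ha')) (hH (hmem hb)) h ▸ hb) with
    hlt | hgt
  · refine hdisj ha' (mem_run_of_preBetween hT hH hw₂ hb' hb (hmem ha') ?_)
    rw [preBetween_iff hpos (hH (hmem ha')) (hH (hmem hb')) (hH (hmem hb))]
    omega
  · refine hdisj (mem_run_of_preBetween hT hH hw₁ ha ha' (hmem hb) ?_) hb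
    rw [preBetween_iff hpos (hH (hmem hb)) (hH (hmem ha)) (hH (hmem ha'))]
    omega

theorem exists_preBetween_of_run_ne (hT : IsDelayedTree T) (hH : H ⊆ T.grandchildren t)
    {w₁ w₂ : V} (hw₁ : w₁ ∈ H) (hw₂ : w₂ ∈ H) (hp : T.parent w₁ = T.parent w₂)
    (hne : T.run t H w₁ ≠ T.run t H w₂) :
    ∃ z ∈ H, T.parent z ≠ T.parent w₁ ∧ T.PreBetween t z w₁ w₂ := by
  have hnm : w₂ ∉ T.run t H w₁ := fun h => hne (run_eq_of_mem hT hH hw₁ h).symm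
  simp only [mem_run, not_and, not_forall, not_not] at hnm
  obtain ⟨z, hz, hzp, hzb⟩ := hnm hw₂ hp.symm
  exact ⟨z, hz, hzp, hzb.symm⟩

theorem run_runRep (hT : IsDelayedTree T) (hH : H ⊆ T.grandchildren t) {w : V} (hw : w ∈ H) :
    T.run t H (T.runRep t H w) = T.run t H w :=
  run_eq_of_mem hT hH hw (runRep_mem_run hT hw)

theorem runRep_eq_runRep_iff (hT : IsDelayedTree T) (hH : H ⊆ T.grandchildren t) {w₁ w₂ : V}
    (hw₁ : w₁ ∈ H) (hw₂ : w₂ ∈ H) :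
    T.runRep t H w₁ = T.runRep t H w₂ ↔ T.run t H w₁ = T.run t H w₂ :=
  ⟨fun h => by rw [← run_runRep hT hH hw₁, h, run_runRep hT hH hw₂], fun h => by
    simp only [runRep, h]⟩

theorem pre_iff_of_run_ne (hT : IsDelayedTree T) (hH : H ⊆ T.grandchildren t) {w₁ w₂ : V}
    (hw₁ : w₁ ∈ H) (hw₂ : w₂ ∈ H) (hne : T.run t H w₁ ≠ T.run t H w₂) :
    T.pre t w₁ w₂ ↔ T.pre t (T.runRep t H w₁) (T.runRep t H w₂) :=
  ⟨pre_of_run_ne hT hH hw₁ hw₂ (mem_run_self hT hw₁) (mem_run_self hT hw₂)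
      (runRep_mem_run hT hw₁) (runRep_mem_run hT hw₂) hne,
    pre_of_run_ne hT hH hw₁ hw₂ (runRep_mem_run hT hw₁) (runRep_mem_run hT hw₂)
      (mem_run_self hT hw₁) (mem_run_self hT hw₂) hne⟩

end Runs

section ShiftedOrder

noncomputable def someChild (T : PreDTree V) (u : V) : V := @Classical.epsilon V ⟨u⟩ (T.isChild · u)

/-- The order `≺_s` of the parent `s` of `t`, on the children of `t` (grandchildren of `s`). The
root has no parent: there the children are compared through a child of each. -/
noncomputable def childOrder (T : PreDTree V) (t u v : V) : Prop :=
  if t = T.root then T.pre T.root (T.someChild u) (T.someChild v) else T.pre (T.parent t) u v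

/-- The first intermediate order `◁₁`, defined like `realLT` but using `childOrder`, one level
higher in the tree. -/
def shiftedLT (T : PreDTree V) (x y : V) : Prop :=
  ∃ t u v, T.isChild u t ∧ T.isChild v t ∧ u ≠ v ∧ T.anc u x ∧ T.anc v y ∧ T.childOrder t u v

theorem isChild_someChild {u : V} (hu : ¬ T.isLeaf u) : T.isChild (T.someChild u) u :=
  Classical.epsilon_spec (exists_isChild_of_not_isLeaf hu)

theorem shiftedLT_iff (hT : IsDelayedTree T) {t u v x y : V} (hu : T.isChild u t)
    (hv : T.isChild v t) (huv : u ≠ v) (hx : T.anc u x) (hy : T.anc v y) :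
    T.shiftedLT x y ↔ T.childOrder t u v := by
  refine ⟨fun ⟨t', u', v', hu', hv', huv', hxu', hyv', h⟩ => ?_,
    fun h => ⟨t, u, v, hu, hv, huv, hx, hy, h⟩⟩
  obtain rfl : t = t' := eq_of_splits hT hu hv huv hx hy hu' hv' huv' hxu' hyv'
  rwa [eq_of_anc_of_depth_eq hT hx hxu' (by rw [depth_of_isChild hT hu,
    depth_of_isChild hT hu']), eq_of_anc_of_depth_eq hT hy hyv'
    (by rw [depth_of_isChild hT hv, depth_of_isChild hT hv'])]

theorem shiftedLT_iff_pre (hT : IsDelayedTree T) {t a b : V} (ha : T.isGrandchild a t)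
    (hb : T.isGrandchild b t) (hab : a ≠ b) (hp : T.parent a = T.parent b) :
    T.shiftedLT a b ↔ T.pre t a b := by
  have hroot : T.parent a ≠ T.root := fun h => ha.2.2 (by rw [← ha.2.1, h, hT.parent_root])
  rw [shiftedLT_iff hT ha.1 (hp ▸ hb.1) hab (anc_refl a) (anc_refl b), childOrder, if_neg hroot,
    ha.2.1]

theorem shiftedLT_irrefl (hT : IsDelayedTree T) (x : V) : ¬ T.shiftedLT x x :=
  fun ⟨_, _, _, hu, hv, huv, hux, hvx, _⟩ => huv (eq_of_anc_of_depth_eq hT hux hvx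
    (by rw [depth_of_isChild hT hu, depth_of_isChild hT hv]))

theorem shiftedLT_iff_of_anc (hT : IsDelayedTree T) {t g₁ g₂ x y : V}
    (hg₁ : T.isGrandchild g₁ t) (hg₂ : T.isGrandchild g₂ t) (hne : g₁ ≠ g₂) (hx : T.anc g₁ x)
    (hy : T.anc g₂ y) : T.shiftedLT x y ↔ T.shiftedLT g₁ g₂ := by
  by_cases hp : T.parent g₁ = T.parent g₂
  · rw [shiftedLT_iff hT hg₁.1 (hp ▸ hg₂.1) hne hx hy,
      shiftedLT_iff hT hg₁.1 (hp ▸ hg₂.1) hne (anc_refl g₁) (anc_refl g₂)]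
  · rw [shiftedLT_iff hT hg₁.2 hg₂.2 hp (anc_trans (anc_parent g₁) hx)
      (anc_trans (anc_parent g₂) hy), shiftedLT_iff hT hg₁.2 hg₂.2 hp (anc_parent g₁)
      (anc_parent g₂)]

variable [Fintype V] {C : PermClass}

theorem realizes_grandchildren (hT : IsDelayedTree T)
    (hlab : ∀ t : V, ∀ (m : ℕ) (τ : Equiv.Perm (Fin m)),
      BiorderPerm T.nodeLLT (T.pre t) {x | T.isGrandchild x t} τ → C m τ)
    (t : V) : C.Realizes T.nodeLLT (T.pre t) (T.grandchildren t) := by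
  obtain ⟨ρ, hρ⟩ := exists_biorderPerm (strictLinearOn_nodeLLT hT fun u hu w hw => by
      rw [depth_of_isGrandchild hT (mem_grandchildren.mp hu),
        depth_of_isGrandchild hT (mem_grandchildren.mp hw)])
    (strictLinearOn_pre hT t)
  refine ⟨_, ρ, hρ, hlab t _ ρ ?_⟩
  convert hρ
  ext
  simp

theorem realizes_children (hT : IsDelayedTree T) (hpat : ClosedUnderPatterns C)
    (hlab : ∀ t, C.Realizes T.nodeLLT (T.pre t) (T.grandchildren t)) {t : V}
    (hgc : (T.grandchildren t).Nonempty) :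
    C.Realizes T.nodeLLT (T.childOrder t) (T.children t) := by
  by_cases ht : t = T.root
  · subst ht
    have hsc : ∀ u ∈ T.children T.root, T.isChild (T.someChild u) u :=
      fun u hu => isChild_someChild (not_isLeaf_of_mem_children hT hgc hu)
    refine ((hlab T.root).mono hpat fun w hw => ?_).comap (T.someChild)
      (fun u hu v hv h => by rw [← (hsc u hu).1, h, (hsc v hv).1]) (fun u hu v hv => ?_)
      (fun u _ v _ => by rw [childOrder, if_pos rfl])
    · obtain ⟨u, hu, rfl⟩ := Finset.mem_image.mp hw
      rw [mem_grandchildren, isGrandchild, (hsc u hu).1]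
      exact ⟨hsc u hu, mem_children.mp hu⟩
    · by_cases huv : u = v
      · subst huv
        exact iff_of_false (nodeLLT_irrefl hT u) (nodeLLT_irrefl hT _)
      exact (nodeLLT_iff_of_anc hT (anc_of_isChild (hsc u hu)) (anc_of_isChild (hsc v hv))
        (disjoint_leafFinset hT (by rw [depth_of_isChild hT (mem_children.mp hu),
          depth_of_isChild hT (mem_children.mp hv)]) huv)).symm
  · refine ((hlab (T.parent t)).mono hpat fun u hu => ?_).congr (fun _ _ _ _ => Iff.rfl)
      fun u _ v _ => by rw [childOrder, if_neg ht]
    have hu := mem_children.mp hu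
    rw [mem_grandchildren, isGrandchild, hu.1]
    exact ⟨hu, isChild_parent hT ht⟩

theorem image_childToward_leafFinset (hT : IsDelayedTree T) {t : V} (ht : ¬ T.isLeaf t) :
    (T.leafFinset t).image (T.childToward t) = T.children t := by
  ext u
  simp only [Finset.mem_image, mem_leafFinset, mem_children]
  constructor
  · rintro ⟨x, ⟨hx, ha⟩, rfl⟩
    exact isChild_childToward hT ha (depth_lt_of_anc hT ha fun h => ht (h ▸ hx))
  · intro hu
    obtain ⟨x, hx⟩ := leafFinset_nonempty hT u
    have hx := mem_leafFinset.mp hx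
    exact ⟨x, ⟨hx.1, anc_trans (anc_of_isChild hu) hx.2⟩, childToward_eq hT hu hx.2⟩

theorem filter_childToward_leafFinset (hT : IsDelayedTree T) {t u : V} (hu : T.isChild u t) :
    (T.leafFinset t).filter (T.childToward t · = u) = T.leafFinset u := by
  ext x
  simp only [Finset.mem_filter, mem_leafFinset]
  refine ⟨fun ⟨⟨hx, ha⟩, h⟩ => ⟨hx, h ▸ anc_childToward t x⟩, fun ⟨hx, ha⟩ =>
    ⟨⟨hx, anc_trans (anc_of_isChild hu) ha⟩, childToward_eq hT hu ha⟩⟩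

/-- The biorder `(<, ◁₁)` is the substitution, along the tree, of the biorders
`(<, childOrder t)` on the children of each node `t`. -/
theorem realizes_llt_shiftedLT (hT : IsDelayedTree T) (hsub : ClosedUnderSubstitution C)
    (hpat : ClosedUnderPatterns C) (hC1 : C 1 1)
    (hlab : ∀ t, C.Realizes T.nodeLLT (T.pre t) (T.grandchildren t)) (t : V) :
    C.Realizes T.llt T.shiftedLT (T.leafFinset t) := by
  induction t using (measure T.descCount).wf.induction with
  | _ t ih =>
    by_cases hgc : T.grandchildren t = ∅
    · obtain ⟨c, -, hc⟩ := exists_leafFinset_eq_singleton hT hgc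
      rw [hc]
      exact realizes_singleton hC1 (hT.llt_irrefl c) (shiftedLT_irrefl hT c)
    have hgc := Finset.nonempty_iff_ne_empty.mpr hgc
    have ht : ¬ T.isLeaf t := by
      obtain ⟨w, hw⟩ := hgc
      exact not_isLeaf_of_isChild (mem_grandchildren.mp hw).2
    have hmem : ∀ x ∈ T.leafFinset t, x ∈ T.leafFinset (T.childToward t x) ∧
        T.isChild (T.childToward t x) t := fun x hx => by
      have hx := mem_leafFinset.mp hx
      exact ⟨mem_leafFinset.mpr ⟨hx.1, anc_childToward t x⟩,
        isChild_childToward hT hx.2 (depth_lt_of_anc hT hx.2 fun h => ht (h ▸ hx.1))⟩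
    refine PermClass.Realizes.of_fibres (A := T.nodeLLT) (B := T.childOrder t) hsub
      (T.childToward t) ?_ (fun x hx y hy hxy => ?_) (fun x hx y hy hxy => ?_) fun u hu => ?_
    · rw [image_childToward_leafFinset hT ht]
      exact realizes_children hT hpat hlab hgc
    · refine llt_iff_nodeLLT hT (disjoint_leafFinset hT ?_ hxy) (hmem x hx).1 (hmem y hy).1
      rw [depth_of_isChild hT (hmem x hx).2, depth_of_isChild hT (hmem y hy).2]
    · exact shiftedLT_iff hT (hmem x hx).2 (hmem y hy).2 hxy (anc_childToward t x)
        (anc_childToward t y)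
    · rw [image_childToward_leafFinset hT ht, mem_children] at hu
      rw [filter_childToward_leafFinset hT hu]
      exact ih u (descCount_lt_of_isChild hT hu)

end ShiftedOrder

section SeparationProcess

variable {t : V} {H : Finset V}

def SepContinues (T : PreDTree V) (t : V) (H : Finset V) (x y : V) : Prop :=
  T.anc t x ∧ T.anc t y ∧ T.depth t + 2 ≤ T.depth x ∧ T.depth t + 2 ≤ T.depth y ∧
    T.grandchildToward t x ∈ H ∧ T.grandchildToward t y ∈ H ∧
    T.run t H (T.grandchildToward t x) = T.run t H (T.grandchildToward t y)

noncomputable def leafRunRep (T : PreDTree V) (t : V) (H : Finset V) (x : V) : V :=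
  T.runRep t H (T.grandchildToward t x)

variable [Fintype V] {C : PermClass}

/-- The separation process for the pair `x, y`, run from the state `(t, H)`: while `x` and `y`
lie below one run of `H`, it descends to the grandchildren of the run if the run is a single
node, and to the children of the run otherwise. -/
noncomputable def sepState (hT : IsDelayedTree T) (t : V) (H : Finset V) (x y : V) :
    V × Finset V :=
  if _ : T.SepContinues t H x y then
    if T.run t H (T.grandchildToward t x) = {T.grandchildToward t x} then
      sepState hT (T.grandchildToward t x) (T.grandchildren (T.grandchildToward t x)) x y
    else
      sepState hT (T.parent (T.grandchildToward t x))
        ((T.run t H (T.grandchildToward t x)).biUnion T.children) x y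
  else (t, H)
termination_by T.descCount t
decreasing_by
  all_goals obtain ⟨hx, -, hdx, -⟩ := ‹T.SepContinues t H x y›
  · exact descCount_lt_of_isGrandchild hT (isGrandchild_grandchildToward hT hx hdx)
  · exact descCount_lt_of_isChild hT (isGrandchild_grandchildToward hT hx hdx).2

/-- The second intermediate order `◁₂`: the separation process started at the root stops at a
state where `x` and `y` lie below distinct runs, which are then compared by `<`. -/
noncomputable def runLT (hT : IsDelayedTree T) (x y : V) : Prop :=
  match sepState hT T.root (T.grandchildren T.root) x y with
  | (t, H) => T.nodeLLT (T.leafRunRep t H x) (T.leafRunRep t H y)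

/-- Started at the root, the separation process passes through `(t, H)` for every pair of leaves
below `H`. -/
def IsSepState (hT : IsDelayedTree T) (t : V) (H : Finset V) : Prop :=
  H ⊆ T.grandchildren t ∧ ∀ x ∈ H.biUnion T.leafFinset, ∀ y ∈ H.biUnion T.leafFinset,
    sepState hT T.root (T.grandchildren T.root) x y = sepState hT t H x y

theorem isSepState_root (hT : IsDelayedTree T) :
    IsSepState hT T.root (T.grandchildren T.root) :=
  ⟨subset_rfl, fun _ _ _ _ => rfl⟩

theorem runLT_irrefl (hT : IsDelayedTree T) (x : V) : ¬ runLT hT x x := by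
  unfold runLT
  split
  exact nodeLLT_irrefl hT _

theorem grandchildToward_eq_of_mem (hT : IsDelayedTree T) (hH : H ⊆ T.grandchildren t) {g x : V}
    (hg : g ∈ H) (hx : x ∈ T.leafFinset g) :
    T.anc t x ∧ T.depth t + 2 ≤ T.depth x ∧ T.grandchildToward t x = g := by
  have hgc := mem_grandchildren.mp (hH hg)
  have hgx := (mem_leafFinset.mp hx).2
  exact ⟨anc_trans (anc_of_isGrandchild hgc) hgx,
    depth_of_isGrandchild hT hgc ▸ depth_le_of_anc hT hgx, grandchildToward_eq hT hgc hgx⟩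

theorem sepState_eq_self (hT : IsDelayedTree T) (hH : H ⊆ T.grandchildren t) {g₁ g₂ x y : V}
    (hg₁ : g₁ ∈ H) (hg₂ : g₂ ∈ H) (hx : x ∈ T.leafFinset g₁) (hy : y ∈ T.leafFinset g₂)
    (hne : T.run t H g₁ ≠ T.run t H g₂) : sepState hT t H x y = (t, H) := by
  rw [sepState, dif_neg]
  rintro ⟨-, -, -, -, -, -, h⟩
  rw [(grandchildToward_eq_of_mem hT hH hg₁ hx).2.2,
    (grandchildToward_eq_of_mem hT hH hg₂ hy).2.2] at h
  exact hne h

theorem sepContinues_of_mem_run (hT : IsDelayedTree T) (hH : H ⊆ T.grandchildren t)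
    {w g₁ g₂ x y : V} (hw : w ∈ H) (hg₁ : g₁ ∈ T.run t H w) (hg₂ : g₂ ∈ T.run t H w)
    (hx : x ∈ T.leafFinset g₁) (hy : y ∈ T.leafFinset g₂) : T.SepContinues t H x y := by
  obtain ⟨hax, hdx, hgx⟩ := grandchildToward_eq_of_mem hT hH (mem_run.mp hg₁).1 hx
  obtain ⟨hay, hdy, hgy⟩ := grandchildToward_eq_of_mem hT hH (mem_run.mp hg₂).1 hy
  refine ⟨hax, hay, hdx, hdy, hgx ▸ (mem_run.mp hg₁).1, hgy ▸ (mem_run.mp hg₂).1, ?_⟩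
  rw [hgx, hgy, run_eq_of_mem hT hH hw hg₁, run_eq_of_mem hT hH hw hg₂]

theorem IsSepState.of_run_eq_singleton {hT : IsDelayedTree T} (hs : IsSepState hT t H) {w : V}
    (hw : w ∈ H) (hrun : T.run t H w = {w}) : IsSepState hT w (T.grandchildren w) := by
  refine ⟨subset_rfl, fun x hx y hy => ?_⟩
  have hsub : (T.grandchildren w).biUnion T.leafFinset ⊆ T.leafFinset w := fun z hz => by
    obtain ⟨g, hg, hz⟩ := Finset.mem_biUnion.mp hz
    exact leafFinset_subset_of_anc (anc_of_isGrandchild (mem_grandchildren.mp hg)) hz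
  have hwH : T.leafFinset w ⊆ H.biUnion T.leafFinset := Finset.subset_biUnion_of_mem _ hw
  have hrw := mem_run_self hT (t := t) hw
  have hgx := (grandchildToward_eq_of_mem hT hs.1 hw (hsub hx)).2.2
  rw [hs.2 x (hwH (hsub hx)) y (hwH (hsub hy)), sepState,
    dif_pos (sepContinues_of_mem_run hT hs.1 hw hrw hrw (hsub hx) (hsub hy)), hgx, if_pos hrun]

theorem not_isLeaf_of_mem_run (hT : IsDelayedTree T) (hH : H ⊆ T.grandchildren t) {w g : V}
    (hw : w ∈ H) (hrun : T.run t H w ≠ {w}) (hg : g ∈ T.run t H w) : ¬ T.isLeaf g := by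
  intro hl
  have hsib : ∀ s ∈ T.run t H w, s = g := fun s hs => hT.leaf_only_child g s hl
    ⟨by rw [(mem_run.mp hs).2.1, (mem_run.mp hg).2.1], fun h =>
      (mem_grandchildren.mp (hH (mem_run.mp hs).1)).1.2 (by rw [(mem_run.mp hs).2.1,
        ← (mem_run.mp hg).2.1, h])⟩
  exact hrun (Finset.eq_singleton_iff_unique_mem.mpr
    ⟨mem_run_self hT hw, fun s hs => (hsib s hs).trans (hsib w (mem_run_self hT hw)).symm⟩)

theorem biUnion_children_run_subset (hH : H ⊆ T.grandchildren t) {w : V} :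
    (T.run t H w).biUnion T.children ⊆ T.grandchildren (T.parent w) := fun c hc => by
  obtain ⟨g, hg, hc⟩ := Finset.mem_biUnion.mp hc
  have hc := mem_children.mp hc
  rw [mem_grandchildren, isGrandchild, hc.1, ← (mem_run.mp hg).2.1]
  exact ⟨hc, (mem_grandchildren.mp (hH (mem_run.mp hg).1)).1⟩

theorem IsSepState.of_run_ne_singleton {hT : IsDelayedTree T} (hs : IsSepState hT t H) {w : V}
    (hw : w ∈ H) (hrun : T.run t H w ≠ {w}) :
    IsSepState hT (T.parent w) ((T.run t H w).biUnion T.children) := by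
  refine ⟨biUnion_children_run_subset hs.1, fun x hx y hy => ?_⟩
  have hlift : ∀ z ∈ ((T.run t H w).biUnion T.children).biUnion T.leafFinset,
      ∃ g ∈ T.run t H w, z ∈ T.leafFinset g := fun z hz => by
    obtain ⟨c, hc, hz⟩ := Finset.mem_biUnion.mp hz
    obtain ⟨g, hg, hc⟩ := Finset.mem_biUnion.mp hc
    exact ⟨g, hg, leafFinset_subset_of_anc (anc_of_isChild (mem_children.mp hc)) hz⟩
  obtain ⟨g₁, hg₁, hx⟩ := hlift x hx
  obtain ⟨g₂, hg₂, hy⟩ := hlift y hy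
  have hg₁H := (mem_run.mp hg₁).1
  have hrun₁ := run_eq_of_mem hT hs.1 hw hg₁
  have hgx := (grandchildToward_eq_of_mem hT hs.1 hg₁H hx).2.2
  have hsing : T.run t H g₁ ≠ {g₁} := fun h => by
    have hwg : w ∈ T.run t H g₁ := hrun₁ ▸ mem_run_self hT hw
    rw [h, Finset.mem_singleton] at hwg
    subst hwg
    exact hrun h
  rw [hs.2 x (Finset.subset_biUnion_of_mem _ hg₁H hx) y
    (Finset.subset_biUnion_of_mem _ (mem_run.mp hg₂).1 hy), sepState,
    dif_pos (sepContinues_of_mem_run hT hs.1 hw hg₁ hg₂ hx hy), hgx, if_neg hsing, hrun₁,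
    (mem_run.mp hg₁).2.1]

theorem leafRunRep_eq (hT : IsDelayedTree T) (hH : H ⊆ T.grandchildren t) {g x : V} (hg : g ∈ H)
    (hx : x ∈ T.leafFinset g) : T.leafRunRep t H x = T.runRep t H g := by
  rw [leafRunRep, (grandchildToward_eq_of_mem hT hH hg hx).2.2]

theorem image_leafRunRep (hT : IsDelayedTree T) (hH : H ⊆ T.grandchildren t) :
    (H.biUnion T.leafFinset).image (T.leafRunRep t H) = H.image (T.runRep t H) := by
  ext r
  simp only [Finset.mem_image, Finset.mem_biUnion]
  constructor
  · rintro ⟨x, ⟨g, hg, hx⟩, rfl⟩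
    exact ⟨g, hg, (leafRunRep_eq hT hH hg hx).symm⟩
  · rintro ⟨g, hg, rfl⟩
    obtain ⟨x, hx⟩ := leafFinset_nonempty hT g
    exact ⟨x, ⟨g, hg, hx⟩, leafRunRep_eq hT hH hg hx⟩

theorem filter_leafRunRep (hT : IsDelayedTree T) (hH : H ⊆ T.grandchildren t) {w : V}
    (hw : w ∈ H) : (H.biUnion T.leafFinset).filter (T.leafRunRep t H · = T.runRep t H w) =
      (T.run t H w).biUnion T.leafFinset := by
  ext x
  simp only [Finset.mem_filter, Finset.mem_biUnion]
  constructor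
  · rintro ⟨⟨g, hg, hx⟩, h⟩
    rw [leafRunRep_eq hT hH hg hx, runRep_eq_runRep_iff hT hH hg hw] at h
    exact ⟨g, h ▸ mem_run_self hT hg, hx⟩
  · rintro ⟨g, hg, hx⟩
    have hgH := (mem_run.mp hg).1
    exact ⟨⟨g, hgH, hx⟩, by rw [leafRunRep_eq hT hH hgH hx, runRep_eq_runRep_iff hT hH hgH hw,
      run_eq_of_mem hT hH hw hg]⟩

theorem biUnion_leafFinset_run (hT : IsDelayedTree T) (hH : H ⊆ T.grandchildren t) {w : V}
    (hw : w ∈ H) (hrun : T.run t H w ≠ {w}) :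
    (T.run t H w).biUnion T.leafFinset =
      ((T.run t H w).biUnion T.children).biUnion T.leafFinset := by
  rw [Finset.biUnion_biUnion]
  exact Finset.biUnion_congr rfl fun g hg =>
    leafFinset_eq_biUnion_children hT (not_isLeaf_of_mem_run hT hH hw hrun hg)

/-- Induction along the separation process: a biorder `(P, Q)` on the leaves below a state
`(t, H)` lies in `C` as soon as, at every state, it is constant between the leaves below two
distinct runs and compares them there by a biorder `(A, B)` on the run representatives that lies
in `C`. -/
theorem realizes_of_isSepState (hT : IsDelayedTree T) (hsub : ClosedUnderSubstitution C)
    (hC0 : C 0 1) (hC1 : C 1 1) {P Q : V → V → Prop} (hP : ∀ x, ¬ P x x) (hQ : ∀ x, ¬ Q x x)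
    (htop : ∀ t H, IsSepState hT t H → H.Nonempty → ∃ A B : V → V → Prop,
      C.Realizes A B (H.image (T.runRep t H)) ∧
      ∀ g₁ ∈ H, ∀ g₂ ∈ H, T.run t H g₁ ≠ T.run t H g₂ →
        ∀ x ∈ T.leafFinset g₁, ∀ y ∈ T.leafFinset g₂,
          (P x y ↔ A (T.runRep t H g₁) (T.runRep t H g₂)) ∧
          (Q x y ↔ B (T.runRep t H g₁) (T.runRep t H g₂)))
    (hs : IsSepState hT t H) : C.Realizes P Q (H.biUnion T.leafFinset) := by
  induction t using (measure T.descCount).wf.induction generalizing H with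
  | _ t ih =>
    rcases H.eq_empty_or_nonempty with rfl | hne
    · rw [Finset.biUnion_empty]
      exact realizes_empty hC0
    obtain ⟨A, B, htopR, hcross⟩ := htop t H hs hne
    have hcross' : ∀ x ∈ H.biUnion T.leafFinset, ∀ y ∈ H.biUnion T.leafFinset,
        T.leafRunRep t H x ≠ T.leafRunRep t H y →
        (P x y ↔ A (T.leafRunRep t H x) (T.leafRunRep t H y)) ∧
        (Q x y ↔ B (T.leafRunRep t H x) (T.leafRunRep t H y)) := fun x hx y hy hxy => by
      obtain ⟨g₁, hg₁, hx⟩ := Finset.mem_biUnion.mp hx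
      obtain ⟨g₂, hg₂, hy⟩ := Finset.mem_biUnion.mp hy
      rw [leafRunRep_eq hT hs.1 hg₁ hx, leafRunRep_eq hT hs.1 hg₂ hy] at hxy ⊢
      exact hcross g₁ hg₁ g₂ hg₂ (fun h => hxy ((runRep_eq_runRep_iff hT hs.1 hg₁ hg₂).mpr h))
        x hx y hy
    refine PermClass.Realizes.of_fibres hsub (T.leafRunRep t H)
      (by rwa [image_leafRunRep hT hs.1]) (fun x hx y hy hxy => (hcross' x hx y hy hxy).1)
      (fun x hx y hy hxy => (hcross' x hx y hy hxy).2) fun r hr => ?_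
    rw [image_leafRunRep hT hs.1] at hr
    obtain ⟨w, hw, rfl⟩ := Finset.mem_image.mp hr
    rw [filter_leafRunRep hT hs.1 hw]
    have hwt := mem_grandchildren.mp (hs.1 hw)
    by_cases hrun : T.run t H w = {w}
    · rw [hrun, Finset.singleton_biUnion]
      by_cases hgc : T.grandchildren w = ∅
      · obtain ⟨c, -, hc⟩ := exists_leafFinset_eq_singleton hT hgc
        exact hc ▸ realizes_singleton hC1 (hP c) (hQ c)
      · rw [leafFinset_eq_biUnion_grandchildren hT (Finset.nonempty_iff_ne_empty.mpr hgc)]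
        exact ih w (descCount_lt_of_isGrandchild hT hwt) (hs.of_run_eq_singleton hw hrun)
    · rw [biUnion_leafFinset_run hT hs.1 hw hrun]
      exact ih _ (descCount_lt_of_isChild hT hwt.2) (hs.of_run_ne_singleton hw hrun)

theorem runLT_iff (hT : IsDelayedTree T) (hs : IsSepState hT t H) {g₁ g₂ x y : V} (hg₁ : g₁ ∈ H)
    (hg₂ : g₂ ∈ H) (hne : T.run t H g₁ ≠ T.run t H g₂) (hx : x ∈ T.leafFinset g₁)
    (hy : y ∈ T.leafFinset g₂) :
    runLT hT x y ↔ T.nodeLLT (T.runRep t H g₁) (T.runRep t H g₂) := by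
  rw [runLT, hs.2 x (Finset.mem_biUnion.mpr ⟨g₁, hg₁, hx⟩) y
    (Finset.mem_biUnion.mpr ⟨g₂, hg₂, hy⟩), sepState_eq_self hT hs.1 hg₁ hg₂ hx hy hne]
  dsimp only
  rw [leafRunRep_eq hT hs.1 hg₁ hx, leafRunRep_eq hT hs.1 hg₂ hy]

theorem realLT_iff_of_run_ne (hT : IsDelayedTree T) (hW : T.WellFormed)
    (hH : H ⊆ T.grandchildren t) {g₁ g₂ x y : V} (hg₁ : g₁ ∈ H) (hg₂ : g₂ ∈ H)
    (hne : T.run t H g₁ ≠ T.run t H g₂) (hx : x ∈ T.leafFinset g₁) (hy : y ∈ T.leafFinset g₂) :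
    T.realLT x y ↔ T.pre t (T.runRep t H g₁) (T.runRep t H g₂) := by
  have hgc₁ := mem_grandchildren.mp (hH hg₁)
  have hgc₂ := mem_grandchildren.mp (hH hg₂)
  have hax := (mem_leafFinset.mp hx).2
  have hay := (mem_leafFinset.mp hy).2
  rw [← pre_iff_of_run_ne hT hH hg₁ hg₂ hne]
  by_cases hp : T.parent g₁ = T.parent g₂
  · -- an element of `H` under another parent separates `g₁` and `g₂`, and with them `x` and `y`
    obtain ⟨z, hz, hzp, hzb⟩ := exists_preBetween_of_run_ne hT hH hg₁ hg₂ hp hne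
    have hgcz := mem_grandchildren.mp (hH hz)
    rcases hzb with ⟨h₁, h₂⟩ | ⟨h₁, h₂⟩
    · exact iff_of_true (realLT_of_pre_of_pre hT hW hgc₁ hgc₂ hgcz hzp (hp ▸ hzp) h₁ h₂ hax hay)
        (hT.pre_trans t _ _ _ h₁ h₂)
    · have hyx := realLT_of_pre_of_pre hT hW hgc₂ hgc₁ hgcz (hp ▸ hzp) hzp h₁ h₂ hay hax
      exact iff_of_false (fun hxy => hW.1 x (hW.2.1 x y x hxy hyx))
        fun h => hT.pre_irrefl t g₁ (hT.pre_trans t _ _ _ h (hT.pre_trans t _ _ _ h₁ h₂))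
  · exact realLT_iff_pre hT hgc₁ hgc₂ hp hax hay

theorem shiftedLT_iff_of_run_ne (hT : IsDelayedTree T) (hH : H ⊆ T.grandchildren t)
    {g₁ g₂ x y : V} (hg₁ : g₁ ∈ H) (hg₂ : g₂ ∈ H) (hne : T.run t H g₁ ≠ T.run t H g₂)
    (hx : x ∈ T.leafFinset g₁) (hy : y ∈ T.leafFinset g₂) :
    T.shiftedLT x y ↔ T.shiftedLT (T.runRep t H g₁) (T.runRep t H g₂) := by
  have hgc₁ := mem_grandchildren.mp (hH hg₁)
  have hgc₂ := mem_grandchildren.mp (hH hg₂)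
  have hrc₁ := mem_grandchildren.mp (hH (runRep_mem hT (t := t) hg₁))
  have hrc₂ := mem_grandchildren.mp (hH (runRep_mem hT (t := t) hg₂))
  have hp₁ := parent_runRep hT (t := t) hg₁
  have hp₂ := parent_runRep hT (t := t) hg₂
  have hrne : T.runRep t H g₁ ≠ T.runRep t H g₂ :=
    fun h => hne ((runRep_eq_runRep_iff hT hH hg₁ hg₂).mp h)
  rw [shiftedLT_iff_of_anc hT hgc₁ hgc₂ (fun h => hne (h ▸ rfl)) (mem_leafFinset.mp hx).2
    (mem_leafFinset.mp hy).2]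
  by_cases hp : T.parent g₁ = T.parent g₂
  · rw [shiftedLT_iff_pre hT hgc₁ hgc₂ (fun h => hne (h ▸ rfl)) hp,
      shiftedLT_iff_pre hT hrc₁ hrc₂ hrne (by rw [hp₁, hp₂, hp]),
      pre_iff_of_run_ne hT hH hg₁ hg₂ hne]
  · rw [shiftedLT_iff hT hgc₁.2 hgc₂.2 hp (anc_parent g₁) (anc_parent g₂),
      shiftedLT_iff hT hrc₁.2 hrc₂.2 (by rwa [hp₁, hp₂]) (anc_parent _) (anc_parent _), hp₁, hp₂]

/-- On grandchildren of `t`, `(◁₁, <)` is the substitution of the biorders `(≺_t, <)` on the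
children of each child of `t` into the biorder `(childOrder t, <)` on the children of `t`. -/
theorem realizes_shiftedLT_nodeLLT (hT : IsDelayedTree T) (hsub : ClosedUnderSubstitution C)
    (hpat : ClosedUnderPatterns C) (hinv : ClosedUnderInverse C)
    (hlab : ∀ t, C.Realizes T.nodeLLT (T.pre t) (T.grandchildren t)) {R : Finset V}
    (hR : R ⊆ T.grandchildren t) (hne : R.Nonempty) : C.Realizes T.shiftedLT T.nodeLLT R := by
  have hpar : ∀ a ∈ R, T.isChild (T.parent a) t := fun a ha => (mem_grandchildren.mp (hR ha)).2
  refine PermClass.Realizes.of_fibres (A := T.childOrder t) (B := T.nodeLLT) hsub T.parent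
    ?_ (fun a ha b hb hab => ?_) (fun a ha b hb hab => ?_) fun u _ => ?_
  · refine (((realizes_children hT hpat hlab (hne.mono hR)).mono hpat fun u hu => ?_).swap hinv)
    obtain ⟨a, ha, rfl⟩ := Finset.mem_image.mp hu
    exact mem_children.mpr (hpar a ha)
  · exact shiftedLT_iff hT (hpar a ha) (hpar b hb) hab (anc_parent a) (anc_parent b)
  · exact nodeLLT_iff_of_anc hT (anc_parent a) (anc_parent b) (disjoint_leafFinset hT
      (by rw [depth_of_isChild hT (hpar a ha), depth_of_isChild hT (hpar b hb)]) hab)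
  · refine (((hlab t).mono hpat ((Finset.filter_subset _ R).trans hR)).swap hinv).congr
      (fun a ha b hb => ?_) fun _ _ _ _ => Iff.rfl
    by_cases hab : a = b
    · subst hab
      exact iff_of_false (hT.pre_irrefl t a) (shiftedLT_irrefl hT a)
    rw [Finset.mem_filter] at ha hb
    exact (shiftedLT_iff_pre hT (mem_grandchildren.mp (hR ha.1)) (mem_grandchildren.mp (hR hb.1))
      hab (ha.2.trans hb.2.symm)).symm

theorem realizes_shiftedLT_runLT (hT : IsDelayedTree T) (hsub : ClosedUnderSubstitution C)
    (hpat : ClosedUnderPatterns C) (hinv : ClosedUnderInverse C) (hC0 : C 0 1) (hC1 : C 1 1)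
    (hlab : ∀ t, C.Realizes T.nodeLLT (T.pre t) (T.grandchildren t)) :
    C.Realizes T.shiftedLT (runLT hT) ((T.grandchildren T.root).biUnion T.leafFinset) :=
  realizes_of_isSepState hT hsub hC0 hC1 (shiftedLT_irrefl hT) (runLT_irrefl hT)
    (fun _ _ hs hne => ⟨T.shiftedLT, T.nodeLLT, realizes_shiftedLT_nodeLLT hT hsub hpat hinv hlab
      ((image_runRep_subset hT).trans hs.1) (hne.image _),
      fun _ hg₁ _ hg₂ hrun _ hx _ hy => ⟨shiftedLT_iff_of_run_ne hT hs.1 hg₁ hg₂ hrun hx hy,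
        runLT_iff hT hs hg₁ hg₂ hrun hx hy⟩⟩)
    (isSepState_root hT)

theorem realizes_runLT_realLT (hT : IsDelayedTree T) (hW : T.WellFormed)
    (hsub : ClosedUnderSubstitution C) (hpat : ClosedUnderPatterns C) (hC0 : C 0 1)
    (hC1 : C 1 1) (hlab : ∀ t, C.Realizes T.nodeLLT (T.pre t) (T.grandchildren t)) :
    C.Realizes (runLT hT) T.realLT ((T.grandchildren T.root).biUnion T.leafFinset) :=
  realizes_of_isSepState hT hsub hC0 hC1 (runLT_irrefl hT) hW.1
    (fun t _ hs _ => ⟨T.nodeLLT, T.pre t, (hlab t).mono hpat ((image_runRep_subset hT).trans hs.1),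
      fun _ hg₁ _ hg₂ hrun _ hx _ hy => ⟨runLT_iff hT hs hg₁ hg₂ hrun hx hy,
        realLT_iff_of_run_ne hT hW hs.1 hg₁ hg₂ hrun hx hy⟩⟩)
    (isSepState_root hT)

end SeparationProcess

end PreDTree

open PreDTree

/-- If `C` is closed under substitution, taking patterns, and inverse, then every
permutation obtained by delayed substitution from `C` (i.e. realised by a well-formed
delayed structured tree all of whose local permutations `(<_t, ≺_t)` on grandchildren
belong to `C`) is a product of at most 3 permutations of `C`. -/
theorem delayed_substitution_decomposition (C : PermClass)
    (hsub : ClosedUnderSubstitution C) (hpat : ClosedUnderPatterns C)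
    (hinv : ClosedUnderInverse C)
    {V : Type*} [Fintype V] (T : PreDTree V) (hT : IsDelayedTree T) (hW : T.WellFormed)
    (hlab : ∀ t : V, ∀ (m : ℕ) (τ : Equiv.Perm (Fin m)),
      BiorderPerm T.nodeLLT (T.pre t) {x | T.isGrandchild x t} τ → C m τ)
    (n : ℕ) (σ : Equiv.Perm (Fin n))
    (hσ : BiorderPerm T.llt T.realLT {x | T.isLeaf x} σ) :
    ∃ l : List (Equiv.Perm (Fin n)), l.length ≤ 3 ∧ (∀ τ ∈ l, C n τ) ∧ l.prod = σ := by
  by_cases hn : n ≤ 1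
  · have : Subsingleton (Fin n) := Fin.subsingleton_iff_le_one.mpr hn
    exact ⟨[], by simp, by simp, Subsingleton.elim _ _⟩
  have hσ : BiorderPerm T.llt T.realLT ↑(T.leafFinset T.root) σ := by
    convert hσ
    ext x
    simp [anc_root hT]
  have hgc := grandchildren_nonempty hT (hσ.card_eq ▸ not_le.mp hn)
  have hlab : ∀ t, C.Realizes T.nodeLLT (T.pre t) (T.grandchildren t) :=
    realizes_grandchildren hT hlab
  obtain ⟨m, τ, hτ, hCτ⟩ := hlab T.root
  have hC0 : C 0 1 := hpat.one_mem hCτ zero_le_one (Nat.zero_le m)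
  have hC1 : C 1 1 := hpat.one_mem hCτ le_rfl (hτ.card_eq ▸ Finset.card_pos.mpr hgc)
  have h₁ := realizes_llt_shiftedLT hT hsub hpat hC1 hlab T.root
  have h₂ := realizes_shiftedLT_runLT hT hsub hpat hinv hC0 hC1 hlab
  have h₃ := realizes_runLT_realLT hT hW hsub hpat hC0 hC1 hlab
  rw [← leafFinset_eq_biUnion_grandchildren hT hgc] at h₂ h₃
  obtain ⟨τ₃, _, hτ₃, ⟨τ₂, τ₁, hτ₂, hτ₁, rfl⟩, rfl⟩ := (h₃.comp (h₂.comp h₁)).mem hσ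
  exact ⟨[τ₃, τ₂, τ₁], by simp, by simp [hτ₁, hτ₂, hτ₃], by simp⟩
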